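/- arXiv:2512.19973 — 4 statements merged into one kernel-verified Lean document; each statement's English description precedes it below -/
import Mathlib

section
/- Let K_{m₁,m₂} have bipartition X = {x₁,…,x_{m₁}}, Y = {y₁,…,y_{m₂}} with 2 ≤ m₁ ≤ m₂, and let S_i = {x₁,…,x_i, y₁,…,y_{s−i}} with max{1, s−m₂} ≤ i ≤ min{m₁, s−1}. If s ≤ m₂ − m₁ + 2, then κ*_{K_{m₁,m₂}}(S_i) = m₁. -/
open SimpleGraph

/-- A walk of `G` lies inside the subgraph `T` if all of its edges are edges of `T`. -/
def SimpleGraph.Subgraph.walkIn {V : Type*} {G : SimpleGraph V} (T : G.Subgraph)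
    {u v : V} (P : G.Walk u v) : Prop :=
  ∀ e ∈ P.edges, e ∈ T.edgeSet

/-- `T` is an `S`-Steiner tree of `G`: a subtree of `G` containing all of `S`
all of whose leaves (vertices without two distinct neighbours) lie in `S`. -/
def SimpleGraph.IsSteinerTree {V : Type*} (G : SimpleGraph V) (S : Set V)
    (T : G.Subgraph) : Prop :=
  T.coe.IsTree ∧ S ⊆ T.verts ∧
    ∀ v ∈ T.verts, ¬ (∃ a b, a ≠ b ∧ T.Adj v a ∧ T.Adj v b) → v ∈ S

/-- A family of subgraphs of `G` is completely independent (w.r.t. the terminal set `S`)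
if the members are pairwise edge-disjoint, their vertex sets pairwise intersect exactly
in `S`, and for any two vertices of `S`, paths connecting them inside two distinct members
are internally disjoint. -/
def SimpleGraph.CompletelyIndependent {V : Type*} (G : SimpleGraph V) (S : Set V)
    {ι : Type*} (Ts : ι → G.Subgraph) : Prop :=
  ∀ p q, p ≠ q →
    (Ts p).edgeSet ∩ (Ts q).edgeSet = ∅ ∧
    (Ts p).verts ∩ (Ts q).verts = S ∧
    ∀ x₁ ∈ S, ∀ x₂ ∈ S, x₁ ≠ x₂ →
      ∀ P Q : G.Walk x₁ x₂, P.IsPath → Q.IsPath →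
        (Ts p).walkIn P → (Ts q).walkIn Q →
        ∀ v ∈ P.support, v ∈ Q.support → v = x₁ ∨ v = x₂

/-- A family of subgraphs of `G` is internally disjoint (w.r.t. the terminal set `S`)
if the members are pairwise edge-disjoint and their vertex sets pairwise intersect
exactly in `S`. -/
def SimpleGraph.InternallyDisjoint {V : Type*} (G : SimpleGraph V) (S : Set V)
    {ι : Type*} (Ts : ι → G.Subgraph) : Prop :=
  ∀ p q, p ≠ q →
    (Ts p).edgeSet ∩ (Ts q).edgeSet = ∅ ∧ (Ts p).verts ∩ (Ts q).verts = S

/-- `κ*_G(S)`: the maximum number of pairwise completely independent `S`-Steiner trees. -/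
noncomputable def SimpleGraph.cisstPacking {V : Type*} (G : SimpleGraph V) (S : Set V) : ℕ :=
  sSup {k | ∃ Ts : Fin k → G.Subgraph,
    (∀ i, G.IsSteinerTree S (Ts i)) ∧ G.CompletelyIndependent S Ts}

/-- `κ_G(S)`: the maximum number of pairwise internally disjoint `S`-Steiner trees. -/
noncomputable def SimpleGraph.idstPacking {V : Type*} (G : SimpleGraph V) (S : Set V) : ℕ :=
  sSup {k | ∃ Ts : Fin k → G.Subgraph,
    (∀ i, G.IsSteinerTree S (Ts i)) ∧ G.InternallyDisjoint S Ts}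

/-- The generalized `k*`-connectivity `κ*_k(G)`. -/
noncomputable def SimpleGraph.genConnStar {V : Type*} (G : SimpleGraph V) (k : ℕ) : ℕ :=
  sInf (G.cisstPacking '' {S : Set V | S.ncard = k})

/-- The generalized `k`-connectivity `κ_k(G)`. -/
noncomputable def SimpleGraph.genConnK {V : Type*} (G : SimpleGraph V) (k : ℕ) : ℕ :=
  sInf (G.idstPacking '' {S : Set V | S.ncard = k})

section Generic
variable {V : Type*} {G : SimpleGraph V}

lemma walkIn_internal_two_nbrs (T : G.Subgraph) :
    ∀ {u w : V} (P : G.Walk u w), P.IsPath → T.walkIn P →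
    ∀ v ∈ P.support, v ≠ u → v ≠ w →
    ∃ a b, a ≠ b ∧ T.Adj v a ∧ T.Adj v b := by
  intro u w P
  induction P with
  | nil =>
    intro _ _ v hv hvu _
    simp only [Walk.support_nil, List.mem_singleton] at hv
    exact absurd hv hvu
  | @cons u b w h P' ih =>
    intro hP hin v hv hvu hvw
    rw [Walk.support_cons, List.mem_cons] at hv
    rcases hv with rfl | hv
    · exact absurd rfl hvu
    · by_cases hvb : v = b
      · subst hvb
        cases P' with
        | nil => exact absurd rfl hvw
        | @cons b c w h' P'' =>
          refine ⟨u, c, ?_, ?_, ?_⟩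
          · intro hc
            have hu : u ∉ (Walk.cons h' P'').support := ((Walk.cons_isPath_iff h (Walk.cons h' P'')).mp hP).2
            apply hu
            rw [hc, Walk.support_cons]
            exact List.mem_cons_of_mem _ P''.start_mem_support
          · have : s(u, v) ∈ (Walk.cons h (Walk.cons h' P'')).edges := by
              rw [Walk.edges_cons]; exact List.mem_cons_self
            exact ((Subgraph.mem_edgeSet).mp (hin _ this)).symm
          · have : s(v, c) ∈ (Walk.cons h (Walk.cons h' P'')).edges := by
              rw [Walk.edges_cons, Walk.edges_cons]
              exact List.mem_cons_of_mem _ List.mem_cons_self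
            exact (Subgraph.mem_edgeSet).mp (hin _ this)
      · refine ih ((Walk.cons_isPath_iff h P').mp hP).1 ?_ v hv hvb hvw
        intro e he
        exact hin e (by rw [Walk.edges_cons]; exact List.mem_cons_of_mem _ he)

lemma cycle_two_nbrs [DecidableEq V] {v : V} (c : G.Walk v v) (hc : c.IsCycle)
    {u : V} (hu : u ∈ c.support) : ∃ a b, a ≠ b ∧ G.Adj u a ∧ G.Adj u b := by
  have hc' : (c.rotate u hu).IsCycle := hc.rotate hu
  have hlen : 3 ≤ (c.rotate u hu).length := hc'.three_le_length
  have hnn : ¬ (c.rotate u hu).Nil := by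
    rw [Walk.not_nil_iff_lt_length]; omega
  obtain ⟨b, hadj, q, heq⟩ := Walk.not_nil_iff.mp hnn
  have hq : q.IsPath ∧ s(u, b) ∉ q.edges := by
    rw [heq] at hc'
    exact (Walk.cons_isCycle_iff q hadj).mp hc'
  have hqnn : ¬ q.reverse.Nil := by
    rw [Walk.not_nil_iff_lt_length, Walk.length_reverse]
    have : (c.rotate u hu).length = q.length + 1 := by rw [heq, Walk.length_cons]
    omega
  obtain ⟨b2, hadj2, q2, heq2⟩ := Walk.not_nil_iff.mp hqnn
  refine ⟨b, b2, ?_, hadj, hadj2⟩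
  intro hbb
  apply hq.2
  have : s(u, b2) ∈ q.reverse.edges := by
    rw [heq2, Walk.edges_cons]; exact List.mem_cons_self
  rw [Walk.edges_reverse, List.mem_reverse] at this
  rw [← hbb] at this; exact this

end Generic

section Constr

def steinerS (m₁ m₂ s i : ℕ) : Set (Fin m₁ ⊕ Fin m₂) :=
  {v | (∃ t : Fin m₁, v = Sum.inl t ∧ (t : ℕ) < i) ∨
       (∃ t : Fin m₂, v = Sum.inr t ∧ (t : ℕ) < s - i)}

/-- One half of the adjacency relation of the `j`-th tree. -/
def treeA (m₁ m₂ s i : ℕ) (j : Fin m₁) (u v : Fin m₁ ⊕ Fin m₂) : Prop :=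
  (u = Sum.inl j ∧ ∃ t : Fin m₂, (t : ℕ) < s - i ∧ v = Sum.inr t) ∨
  (2 ≤ i + (j : ℕ) ∧ (∃ t : Fin m₂, (t : ℕ) = s + (j : ℕ) - 2 ∧ u = Sum.inr t) ∧
    ∃ k : Fin m₁, ((k : ℕ) < i ∨ k = j) ∧ v = Sum.inl k)

def treeT (m₁ m₂ s i : ℕ) (j : Fin m₁) :
    (completeBipartiteGraph (Fin m₁) (Fin m₂)).Subgraph where
  verts := {w | w ∈ steinerS m₁ m₂ s i ∨ w = Sum.inl j ∨
    (2 ≤ i + (j : ℕ) ∧ ∃ t : Fin m₂, (t : ℕ) = s + (j : ℕ) - 2 ∧ w = Sum.inr t)}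
  Adj u v := treeA m₁ m₂ s i j u v ∨ treeA m₁ m₂ s i j v u
  adj_sub := by
    rintro u v (h | h) <;>
      rcases h with ⟨rfl, t, ht, rfl⟩ | ⟨-, ⟨t, ht, rfl⟩, k, hk, rfl⟩ <;> simp
  edge_vert := by
    rintro u v (h | h)
    · rcases h with ⟨rfl, -⟩ | ⟨hh, ⟨t, ht, rfl⟩, -⟩
      · exact Or.inr (Or.inl rfl)
      · exact Or.inr (Or.inr ⟨hh, t, ht, rfl⟩)
    · rcases h with ⟨-, t, ht, rfl⟩ | ⟨-, -, k, hk, rfl⟩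
      · exact Or.inl (Or.inr ⟨t, rfl, ht⟩)
      · rcases hk with hki | rfl
        · exact Or.inl (Or.inl ⟨k, rfl, hki⟩)
        · exact Or.inr (Or.inl rfl)
  symm := ⟨fun u v h => Or.symm h⟩

/-- hypothesis pack -/
structure Hyp (m₁ m₂ s i : ℕ) : Prop where
  h2m : 2 ≤ m₁
  h12 : m₁ ≤ m₂
  hi : 1 ≤ i
  him : i ≤ m₁
  his : i < s
  ham : s - i ≤ m₂
  hsm : s + m₁ ≤ m₂ + 2

variable {m₁ m₂ s i : ℕ}

lemma Hyp.clt (H : Hyp m₁ m₂ s i) (j : Fin m₁) : s + (j : ℕ) - 2 < m₂ := by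
  obtain ⟨h2m, h12, hi, him, his, ham, hsm⟩ := H
  have := j.2; omega

lemma treeT_adj_cases {j : Fin m₁} {v w : Fin m₁ ⊕ Fin m₂}
    (h : (treeT m₁ m₂ s i j).Adj v w) :
    treeA m₁ m₂ s i j v w ∨ treeA m₁ m₂ s i j w v := h

lemma treeT_two_nbrs (H : Hyp m₁ m₂ s i) (j : Fin m₁) {v a b : Fin m₁ ⊕ Fin m₂}
    (hab : a ≠ b) (h1 : (treeT m₁ m₂ s i j).Adj v a) (h2 : (treeT m₁ m₂ s i j).Adj v b) :
    v = Sum.inl j ∨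
      (2 ≤ i + (j : ℕ) ∧ ∃ t : Fin m₂, (t : ℕ) = s + (j : ℕ) - 2 ∧ v = Sum.inr t) := by
  by_contra hcon
  push_neg at hcon
  obtain ⟨hv1, hv2⟩ := hcon
  -- each neighbour is forced
  have force : ∀ w : Fin m₁ ⊕ Fin m₂, (treeT m₁ m₂ s i j).Adj v w →
      (w = Sum.inl j ∧ ∃ t : Fin m₂, v = Sum.inr t) ∨
      ((∃ t : Fin m₂, (t : ℕ) = s + (j : ℕ) - 2 ∧ w = Sum.inr t) ∧ ∃ k : Fin m₁, v = Sum.inl k) := by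
    intro w hw
    rcases hw with hw | hw
    · rcases hw with ⟨hvj, -⟩ | ⟨hub, hc, -⟩
      · exact absurd hvj hv1
      · obtain ⟨t, ht, hv⟩ := hc
        exact absurd hv (hv2 hub t ht)
    · rcases hw with ⟨hwj, t, ht, hv⟩ | ⟨hub, hc, k, hk, hv⟩
      · exact Or.inl ⟨hwj, t, hv⟩
      · exact Or.inr ⟨hc, k, hv⟩
  rcases force a h1 with ⟨ha, ta, hva⟩ | ⟨⟨ta, hta, ha⟩, ka, hva⟩ <;>
    rcases force b h2 with ⟨hb, tb, hvb⟩ | ⟨⟨tb, htb, hb⟩, kb, hvb⟩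
  · exact hab (ha.trans hb.symm)
  · rw [hva] at hvb; exact absurd hvb (by simp)
  · rw [hva] at hvb; exact absurd hvb.symm (by simp)
  · apply hab
    rw [ha, hb]
    congr 1
    exact Fin.ext (by omega)

end Constr

section Constr2
variable {m₁ m₂ s i : ℕ}

lemma Hyp.s2 (H : Hyp m₁ m₂ s i) : 2 ≤ s := by
  obtain ⟨h2m, h12, hi, him, his, ham, hsm⟩ := H; omega

lemma treeT_conn (H : Hyp m₁ m₂ s i) (j : Fin m₁) : (treeT m₁ m₂ s i j).coe.Connected := by
  have hmemj : (Sum.inl j : Fin m₁ ⊕ Fin m₂) ∈ (treeT m₁ m₂ s i j).verts :=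
    Or.inr (Or.inl rfl)
  have hclt := H.clt j
  have hadjy : ∀ (t : Fin m₂), (t : ℕ) < s - i →
      (treeT m₁ m₂ s i j).Adj (Sum.inl j) (Sum.inr t) := by
    intro t ht; exact Or.inl (Or.inl ⟨rfl, t, ht, rfl⟩)
  have hadjc : ∀ (k : Fin m₁), ((k : ℕ) < i ∨ k = j) → 2 ≤ i + (j : ℕ) →
      (treeT m₁ m₂ s i j).Adj (Sum.inr (⟨s + (j : ℕ) - 2, hclt⟩ : Fin m₂)) (Sum.inl k) := by
    intro k hk hub
    exact Or.inl (Or.inr ⟨hub, ⟨⟨s + (j : ℕ) - 2, hclt⟩, rfl, rfl⟩, k, hk, rfl⟩)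
  have key : ∀ (u : Fin m₁ ⊕ Fin m₂) (hu : u ∈ (treeT m₁ m₂ s i j).verts),
      (treeT m₁ m₂ s i j).coe.Reachable ⟨u, hu⟩ ⟨Sum.inl j, hmemj⟩ := by
    intro u hu
    rcases hu with hS | hj | hc
    · rcases hS with ⟨t, rfl, ht⟩ | ⟨t, rfl, ht⟩
      · by_cases htj : t = j
        · subst htj; rfl
        · have hub : 2 ≤ i + (j : ℕ) := by
            rcases Nat.lt_or_ge i 2 with hi1 | hi2
            · have hi1' : i = 1 := by have := H.hi; omega
              have : (j : ℕ) ≠ 0 := by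
                intro hj0
                exact htj (Fin.ext (by omega))
              omega
            · omega
          exact ((hadjc t (Or.inl ht) hub).symm.coe).reachable.trans
            ((hadjc j (Or.inr rfl) hub).coe).reachable
      · exact ((hadjy t ht).symm.coe).reachable
    · subst hj; rfl
    · obtain ⟨hub, t, ht, hteq⟩ := hc
      subst hteq
      have htv : t = ⟨s + (j : ℕ) - 2, hclt⟩ := Fin.ext ht
      subst htv
      exact ((hadjc j (Or.inr rfl) hub).coe).reachable
  rw [connected_iff_exists_forall_reachable]
  exact ⟨⟨Sum.inl j, hmemj⟩, fun w => (key w.1 w.2).symm⟩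

end Constr2

section Constr3
variable {m₁ m₂ s i : ℕ}

lemma treeT_acyclic (H : Hyp m₁ m₂ s i) (j : Fin m₁) : (treeT m₁ m₂ s i j).coe.IsAcyclic := by
  intro v c hc
  have hclt := H.clt j
  set T := treeT m₁ m₂ s i j with hT
  have key : ∀ u ∈ c.support, (u : Fin m₁ ⊕ Fin m₂) = Sum.inl j ∨
      (u : Fin m₁ ⊕ Fin m₂) = Sum.inr (⟨s + (j : ℕ) - 2, hclt⟩ : Fin m₂) := by
    intro u hu
    obtain ⟨a, b, hab, ha, hb⟩ := cycle_two_nbrs c hc hu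
    have hab' : (a : Fin m₁ ⊕ Fin m₂) ≠ (b : Fin m₁ ⊕ Fin m₂) := fun h => hab (Subtype.ext h)
    have := treeT_two_nbrs H j hab' ha hb
    rcases this with h | ⟨-, t, ht, h⟩
    · exact Or.inl h
    · refine Or.inr ?_
      rw [h]
      congr 1
      exact Fin.ext ht
  have hnd : c.support.tail.Nodup := ((Walk.isCycle_def c).mp hc).2.2
  have hlen : 3 ≤ c.length := hc.three_le_length
  set l : List (Fin m₁ ⊕ Fin m₂) := c.support.tail.map Subtype.val with hl
  have hlnd : l.Nodup := hnd.map Subtype.val_injective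
  have hlen2 : l.length = c.length := by
    rw [hl, List.length_map, List.length_tail, Walk.length_support]
    omega
  have hcard : l.toFinset.card = l.length := List.toFinset_card_of_nodup hlnd
  have hsub : l.toFinset ⊆ {Sum.inl j, Sum.inr (⟨s + (j : ℕ) - 2, hclt⟩ : Fin m₂)} := by
    intro x hx
    rw [List.mem_toFinset, hl, List.mem_map] at hx
    obtain ⟨u, hu, rfl⟩ := hx
    rcases key u (List.mem_of_mem_tail hu) with h | h <;> simp [h]
  have := Finset.card_le_card hsub
  have h2 : ({Sum.inl j, Sum.inr (⟨s + (j : ℕ) - 2, hclt⟩ : Fin m₂)} :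
      Finset (Fin m₁ ⊕ Fin m₂)).card ≤ 2 := Finset.card_insert_le _ _ |>.trans (by simp)
  omega

lemma treeT_steiner (H : Hyp m₁ m₂ s i) (j : Fin m₁) :
    (completeBipartiteGraph (Fin m₁) (Fin m₂)).IsSteinerTree (steinerS m₁ m₂ s i)
      (treeT m₁ m₂ s i j) := by
  have hclt := H.clt j
  have H' := H
  obtain ⟨h2m, h12, hi, him, his, ham, hsm⟩ := H'
  have hjlt := j.2
  refine ⟨⟨treeT_conn H j, treeT_acyclic H j⟩, fun v hv => Or.inl hv, ?_⟩
  intro v hv hno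
  by_contra hvS
  apply hno
  rcases hv with hS | hj | hc
  · exact absurd hS hvS
  · -- v = inl j, and j ≥ i (else v ∈ S)
    subst hj
    have hji : i ≤ (j : ℕ) := by
      by_contra hlt
      exact hvS (Or.inl ⟨j, rfl, by omega⟩)
    have hub : 2 ≤ i + (j : ℕ) := by omega
    refine ⟨Sum.inr (⟨0, by omega⟩ : Fin m₂),
      Sum.inr (⟨s + (j : ℕ) - 2, hclt⟩ : Fin m₂), ?_, ?_, ?_⟩
    · simp only [ne_eq, Sum.inr.injEq, Fin.ext_iff]
      omega
    · exact Or.inl (Or.inl ⟨rfl, ⟨0, by omega⟩, by simp; omega, rfl⟩)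
    · exact Or.inr (Or.inr ⟨hub, ⟨_, rfl, rfl⟩, j, Or.inr rfl, rfl⟩)
  · -- v is the c-vertex
    obtain ⟨hub, t, ht, rfl⟩ := hc
    by_cases hj0 : (j : ℕ) = 0
    · have hi2 : 2 ≤ i := by omega
      refine ⟨Sum.inl j, Sum.inl (⟨1, by omega⟩ : Fin m₁), ?_, ?_, ?_⟩
      · simp only [ne_eq, Sum.inl.injEq, Fin.ext_iff]
        omega
      · exact Or.inl (Or.inr ⟨hub, ⟨t, ht, rfl⟩, j, Or.inr rfl, rfl⟩)
      · exact Or.inl (Or.inr ⟨hub, ⟨t, ht, rfl⟩, ⟨1, by omega⟩, Or.inl (by simpa), rfl⟩)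
    · refine ⟨Sum.inl j, Sum.inl (⟨0, by omega⟩ : Fin m₁), ?_, ?_, ?_⟩
      · simp only [ne_eq, Sum.inl.injEq, Fin.ext_iff]
        omega
      · exact Or.inl (Or.inr ⟨hub, ⟨t, ht, rfl⟩, j, Or.inr rfl, rfl⟩)
      · exact Or.inl (Or.inr ⟨hub, ⟨t, ht, rfl⟩, ⟨0, by omega⟩, Or.inl (by simpa using (show 0 < i by omega)), rfl⟩)

end Constr3

section Constr4
variable {m₁ m₂ s i : ℕ}

lemma treeA_eq_of_common (H : Hyp m₁ m₂ s i) {p q : Fin m₁} {u v : Fin m₁ ⊕ Fin m₂}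
    (h1 : treeA m₁ m₂ s i p u v) (h2 : treeA m₁ m₂ s i q u v) : p = q := by
  have hs2 := H.s2
  rcases h1 with ⟨hu1, -⟩ | ⟨-, ⟨t1, ht1, hu1⟩, -⟩ <;>
    rcases h2 with ⟨hu2, -⟩ | ⟨-, ⟨t2, ht2, hu2⟩, -⟩
  · exact Sum.inl.injEq .. ▸ (hu1 ▸ hu2 : (Sum.inl p : Fin m₁ ⊕ Fin m₂) = Sum.inl q) |> fun h => by
      exact Sum.inl_injective (hu1.symm.trans hu2)
  · rw [hu1] at hu2; exact absurd hu2 (by simp)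
  · rw [hu1] at hu2; exact absurd hu2 (by simp)
  · have : t1 = t2 := Sum.inr_injective (hu1.symm.trans hu2)
    subst this
    exact Fin.ext (by omega)

lemma treeA_not_swap (H : Hyp m₁ m₂ s i) {p q : Fin m₁} {u v : Fin m₁ ⊕ Fin m₂}
    (h1 : treeA m₁ m₂ s i p u v) (h2 : treeA m₁ m₂ s i q v u) : False := by
  have hs2 := H.s2
  have his := H.his
  rcases h1 with ⟨hu1, t, ht, hv1⟩ | ⟨hub1, ⟨t1, ht1, hu1⟩, k1, hk1, hv1⟩
  · rcases h2 with ⟨hv2, -⟩ | ⟨hub2, ⟨t2, ht2, hv2⟩, -⟩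
    · rw [hv1] at hv2; exact absurd hv2 (by simp)
    · rw [hv1] at hv2
      have : t = t2 := Sum.inr_injective hv2
      subst this
      omega
  · rcases h2 with ⟨-, t2, ht2, hu2⟩ | ⟨-, ⟨t2, ht2, hv2⟩, -⟩
    · rw [hu1] at hu2
      have : t1 = t2 := Sum.inr_injective hu2
      subst this
      omega
    · rw [hv1] at hv2; exact absurd hv2 (by simp)

lemma treeT_edge_eq (H : Hyp m₁ m₂ s i) {p q : Fin m₁} {u v : Fin m₁ ⊕ Fin m₂}
    (h1 : (treeT m₁ m₂ s i p).Adj u v) (h2 : (treeT m₁ m₂ s i q).Adj u v) : p = q := by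
  rcases h1 with h1 | h1 <;> rcases h2 with h2 | h2
  · exact treeA_eq_of_common H h1 h2
  · exact absurd (treeA_not_swap H h1 h2) not_false
  · exact absurd (treeA_not_swap H h2 h1) not_false
  · exact treeA_eq_of_common H h1 h2

lemma treeT_vertcap (H : Hyp m₁ m₂ s i) {p q : Fin m₁} (hpq : p ≠ q) :
    (treeT m₁ m₂ s i p).verts ∩ (treeT m₁ m₂ s i q).verts = steinerS m₁ m₂ s i := by
  have hs2 := H.s2
  have his := H.his
  ext u
  constructor
  · rintro ⟨hup, huq⟩
    rcases hup with hS | hj | hc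
    · exact hS
    · subst hj
      rcases huq with hS | hj | hc
      · exact hS
      · exact absurd (Sum.inl_injective hj) hpq
      · obtain ⟨-, t, -, ht⟩ := hc
        exact absurd ht (by simp)
    · obtain ⟨hubp, t, ht, rfl⟩ := hc
      rcases huq with hS | hj | hc
      · rcases hS with ⟨t', ht', -⟩ | ⟨t', ht', hlt⟩
        · exact absurd ht' (by simp)
        · have : t = t' := Sum.inr_injective ht'
          subst this
          omega
      · exact absurd hj (by simp)
      · obtain ⟨-, t', ht', he⟩ := hc
        have : t' = t := Sum.inr_injective he.symm
        subst this
        exact absurd (Fin.ext (by omega) : p = q) hpq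
  · intro h
    exact ⟨Or.inl h, Or.inl h⟩

lemma treeT_ci (H : Hyp m₁ m₂ s i) :
    (completeBipartiteGraph (Fin m₁) (Fin m₂)).CompletelyIndependent (steinerS m₁ m₂ s i)
      (fun j => treeT m₁ m₂ s i j) := by
  intro p q hpq
  refine ⟨?_, treeT_vertcap H hpq, ?_⟩
  · rw [Set.eq_empty_iff_forall_notMem]
    intro e
    induction e using Sym2.ind with
    | _ u v =>
      rintro ⟨he1, he2⟩
      rw [Subgraph.mem_edgeSet] at he1 he2
      exact hpq (treeT_edge_eq H he1 he2)
  · intro x₁ hx₁ x₂ hx₂ hne P Q hP hQ hPin hQin v hvP hvQ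
    by_contra hcon
    push_neg at hcon
    obtain ⟨hv1, hv2⟩ := hcon
    obtain ⟨a, b, hab, ha, hb⟩ :=
      walkIn_internal_two_nbrs (treeT m₁ m₂ s i p) P hP hPin v hvP hv1 hv2
    obtain ⟨a', b', hab', ha', hb'⟩ :=
      walkIn_internal_two_nbrs (treeT m₁ m₂ s i q) Q hQ hQin v hvQ hv1 hv2
    have h1 := treeT_two_nbrs H p hab ha hb
    have h2 := treeT_two_nbrs H q hab' ha' hb'
    have hs2 := H.s2
    rcases h1 with h1 | ⟨-, t1, ht1, h1⟩ <;> rcases h2 with h2 | ⟨-, t2, ht2, h2⟩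
    · exact hpq (Sum.inl_injective (h1.symm.trans h2))
    · rw [h1] at h2; exact absurd h2 (by simp)
    · rw [h1] at h2; exact absurd h2 (by simp)
    · rw [h1] at h2
      have : t1 = t2 := Sum.inr_injective h2
      subst this
      exact hpq (Fin.ext (by omega))

end Constr4

section UB
variable {m₁ m₂ s i : ℕ}

lemma steiner_ub (H : Hyp m₁ m₂ s i) {k : ℕ}
    (Ts : Fin k → (completeBipartiteGraph (Fin m₁) (Fin m₂)).Subgraph)
    (hst : ∀ j, (completeBipartiteGraph (Fin m₁) (Fin m₂)).IsSteinerTree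
      (steinerS m₁ m₂ s i) (Ts j))
    (hci : (completeBipartiteGraph (Fin m₁) (Fin m₂)).CompletelyIndependent
      (steinerS m₁ m₂ s i) Ts) : k ≤ m₁ := by
  obtain ⟨h2m, h12, hi, him, his, ham, hsm⟩ := H
  have hm2 : 0 < m₂ := by omega
  have hm1 : 0 < m₁ := by omega
  set y0 : Fin m₁ ⊕ Fin m₂ := Sum.inr ⟨0, hm2⟩ with hy0
  set x0 : Fin m₁ ⊕ Fin m₂ := Sum.inl ⟨0, hm1⟩ with hx0
  have hy0S : y0 ∈ steinerS m₁ m₂ s i := Or.inr ⟨⟨0, hm2⟩, rfl, by simp; omega⟩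
  have hx0S : x0 ∈ steinerS m₁ m₂ s i := Or.inl ⟨⟨0, hm1⟩, rfl, by simp; omega⟩
  have hchoice : ∀ j : Fin k, ∃ x : Fin m₁, (Ts j).Adj y0 (Sum.inl x) := by
    intro j
    obtain ⟨htree, hsub, -⟩ := hst j
    have hy0v : y0 ∈ (Ts j).verts := hsub hy0S
    have hx0v : x0 ∈ (Ts j).verts := hsub hx0S
    obtain ⟨w⟩ := htree.1.preconnected ⟨y0, hy0v⟩ ⟨x0, hx0v⟩
    have hnn : ¬ w.Nil := Walk.not_nil_of_ne (by simp [hy0, hx0, Subtype.ext_iff])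
    obtain ⟨z, hadj, w', -⟩ := Walk.not_nil_iff.mp hnn
    have hadj' : (Ts j).Adj y0 z.1 := hadj
    have hG := (Ts j).adj_sub hadj'
    simp only [completeBipartiteGraph_adj] at hG
    rcases hG with ⟨hl, -⟩ | ⟨-, hl⟩
    · simp [hy0] at hl
    · obtain ⟨x, hx⟩ := Sum.isLeft_iff.mp hl
      exact ⟨x, hx ▸ hadj'⟩
  choose f hf using hchoice
  have hinj : Function.Injective f := by
    intro j j' hjj
    by_contra hne
    have h1 : s(y0, Sum.inl (f j)) ∈ (Ts j).edgeSet := Subgraph.mem_edgeSet.mpr (hf j)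
    have h2 : s(y0, Sum.inl (f j)) ∈ (Ts j').edgeSet := by
      rw [hjj]; exact Subgraph.mem_edgeSet.mpr (hf j')
    have := (hci j j' hne).1
    rw [Set.eq_empty_iff_forall_notMem] at this
    exact this _ ⟨h1, h2⟩
  simpa using Fintype.card_le_of_injective f hinj

end UB


theorem stmt_9 (m₁ m₂ s i : ℕ) (h1 : 2 ≤ m₁) (h12 : m₁ ≤ m₂)
    (hi1 : max 1 (s - m₂) ≤ i) (hi2 : i ≤ min m₁ (s - 1))
    (hs : s ≤ m₂ - m₁ + 2)
    (Si : Set (Fin m₁ ⊕ Fin m₂))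
    (hSi : Si = {v | (∃ t : Fin m₁, v = Sum.inl t ∧ (t : ℕ) < i) ∨
                     (∃ t : Fin m₂, v = Sum.inr t ∧ (t : ℕ) < s - i)}) :
    (completeBipartiteGraph (Fin m₁) (Fin m₂)).cisstPacking Si = m₁ := by
  have H : Hyp m₁ m₂ s i := by
    refine ⟨h1, h12, ?_, ?_, ?_, ?_, ?_⟩ <;> omega
  have hSeq : Si = steinerS m₁ m₂ s i := hSi
  rw [hSeq]
  unfold SimpleGraph.cisstPacking
  have hmem : m₁ ∈ {k | ∃ Ts : Fin k → (completeBipartiteGraph (Fin m₁) (Fin m₂)).Subgraph,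
      (∀ j, (completeBipartiteGraph (Fin m₁) (Fin m₂)).IsSteinerTree (steinerS m₁ m₂ s i) (Ts j)) ∧
      (completeBipartiteGraph (Fin m₁) (Fin m₂)).CompletelyIndependent (steinerS m₁ m₂ s i) Ts} :=
    ⟨fun j => treeT m₁ m₂ s i j, fun j => treeT_steiner H j, treeT_ci H⟩
  have hub : ∀ k ∈ {k | ∃ Ts : Fin k → (completeBipartiteGraph (Fin m₁) (Fin m₂)).Subgraph,
      (∀ j, (completeBipartiteGraph (Fin m₁) (Fin m₂)).IsSteinerTree (steinerS m₁ m₂ s i) (Ts j)) ∧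
      (completeBipartiteGraph (Fin m₁) (Fin m₂)).CompletelyIndependent (steinerS m₁ m₂ s i) Ts},
      k ≤ m₁ := by
    rintro k ⟨Ts, hst, hci⟩
    exact steiner_ub H Ts hst hci
  exact le_antisymm (csSup_le ⟨m₁, hmem⟩ hub) (le_csSup ⟨m₁, hub⟩ hmem)
end

section
/- Let K_{m₁,m₂} be a complete bipartite graph with 2 ≤ m₁ ≤ m₂ and let s be an integer with s ≥ m₂ − m₁ + 3 and s ≤ m₁ + m₂. Then the generalized s*-connectivity satisfies κ*_s(K_{m₁,m₂}) ≥ m₁ − (m₁ + s − m₂ + 2)/3. -/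
open SimpleGraph

namespace StProof

variable {V : Type*}

/-- complete bipartite graph given by a side function -/
def bipG (P : V → Bool) : SimpleGraph V where
  Adj u v := P u ≠ P v
  symm := ⟨fun _ _ h => Ne.symm h⟩
  loopless := ⟨fun _ h => h rfl⟩

lemma bipG_adj (P : V → Bool) (u v : V) : (bipG P).Adj u v ↔ P u ≠ P v := Iff.rfl

lemma bipG_not (P : V → Bool) : bipG (fun v => !P v) = bipG P := by
  ext u v
  rw [bipG_adj, bipG_adj]
  simp

/-- The subgraph determined by a parent function on the vertex set `W` with root `ρ`. -/
def parentSub (G : SimpleGraph V) (W : Set V) (ρ : V) (h : V → V) : G.Subgraph where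
  verts := W
  Adj v w := G.Adj v w ∧ ((v ∈ W ∧ h v ∈ W ∧ v ≠ ρ ∧ w = h v) ∨
    (w ∈ W ∧ h w ∈ W ∧ w ≠ ρ ∧ v = h w))
  adj_sub := fun hvw => hvw.1
  edge_vert := fun hvw => by
    rcases hvw.2 with ⟨h1, _, _, _⟩ | ⟨_, h2, _, h4⟩
    · exact h1
    · exact h4 ▸ h2
  symm := ⟨fun v w hvw => ⟨hvw.1.symm, hvw.2.symm⟩⟩

/-- The hypotheses making `parentSub` an `S`-Steiner tree with internal vertices in `I`. -/
structure GoodParent (G : SimpleGraph V) (S I : Set V) (ρ : V) (h : V → V) (rk : V → ℕ) :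
    Prop where
  hρ : ρ ∈ S ∪ I
  hpar : ∀ v ∈ S ∪ I, v ≠ ρ → h v ∈ I ∧ G.Adj v (h v) ∧ rk (h v) < rk v
  hleaf : ∀ v ∈ I, v ∉ S → ∃ a b, a ≠ b ∧ (parentSub G (S ∪ I) ρ h).Adj v a ∧
    (parentSub G (S ∪ I) ρ h).Adj v b

namespace GoodParent

variable {G : SimpleGraph V} {S I : Set V} {ρ : V} {h : V → V} {rk : V → ℕ}
  (gp : GoodParent G S I ρ h rk)

lemma adj_cases {v w : V} (hvw : (parentSub G (S ∪ I) ρ h).Adj v w) :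
    (v ∈ S ∪ I ∧ v ≠ ρ ∧ w = h v) ∨ (w ∈ S ∪ I ∧ w ≠ ρ ∧ v = h w) := by
  rcases hvw.2 with ⟨h1, _, h3, h4⟩ | ⟨h1, _, h3, h4⟩
  · exact Or.inl ⟨h1, h3, h4⟩
  · exact Or.inr ⟨h1, h3, h4⟩

include gp

lemma parent_adj {v : V} (hv : v ∈ S ∪ I) (hvρ : v ≠ ρ) :
    (parentSub G (S ∪ I) ρ h).Adj v (h v) := by
  obtain ⟨hI, hadj, _⟩ := gp.hpar v hv hvρ
  exact ⟨hadj, Or.inl ⟨hv, Set.subset_union_right hI, hvρ, rfl⟩⟩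

/-- If `v` has two distinct neighbours in the tree, it is internal. -/
lemma mem_int {v a b : V} (hab : a ≠ b) (ha : (parentSub G (S ∪ I) ρ h).Adj v a)
    (hb : (parentSub G (S ∪ I) ρ h).Adj v b) : v ∈ I := by
  rcases adj_cases ha with ⟨_, _, rfl⟩ | ⟨h1, h2, h3⟩
  · rcases adj_cases hb with ⟨_, _, rfl⟩ | ⟨h1, h2, h3⟩
    · exact absurd rfl hab
    · exact h3 ▸ (gp.hpar b h1 h2).1
  · exact h3 ▸ (gp.hpar a h1 h2).1

lemma reach : ∀ v (hv : v ∈ S ∪ I),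
    (parentSub G (S ∪ I) ρ h).coe.Reachable ⟨v, hv⟩ ⟨ρ, gp.hρ⟩ := by
  have key : ∀ n v (hv : v ∈ S ∪ I), rk v ≤ n →
      (parentSub G (S ∪ I) ρ h).coe.Reachable ⟨v, hv⟩ ⟨ρ, gp.hρ⟩ := by
    intro n
    induction n with
    | zero =>
      intro v hv hr
      by_cases hvρ : v = ρ
      · subst hvρ; rfl
      · exact absurd (gp.hpar v hv hvρ).2.2 (by omega)
    | succ n ih =>
      intro v hv hr
      by_cases hvρ : v = ρ
      · subst hvρ; rfl
      · obtain ⟨hI, _, hrk⟩ := gp.hpar v hv hvρ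
        have hW : h v ∈ S ∪ I := Set.subset_union_right hI
        have adj : (parentSub G (S ∪ I) ρ h).coe.Adj ⟨v, hv⟩ ⟨h v, hW⟩ :=
          gp.parent_adj hv hvρ
        exact adj.reachable.trans (ih (h v) hW (by omega))
  intro v hv
  exact key (rk v) v hv le_rfl

lemma connected : (parentSub G (S ∪ I) ρ h).coe.Connected := by
  rw [connected_iff]
  refine ⟨fun x y => ?_, ⟨⟨ρ, gp.hρ⟩⟩⟩
  exact (gp.reach x.1 x.2).trans (gp.reach y.1 y.2).symm

lemma acyclic : (parentSub G (S ∪ I) ρ h).coe.IsAcyclic := by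
  classical
  intro v c hc
  -- pick a vertex of maximal rank on the cycle
  have htne : c.support.tail ≠ [] := by
    have h3 := hc.three_le_length
    intro hnil
    have h4 := c.length_support
    rw [c.support_eq_cons, hnil] at h4
    rw [List.length_cons, List.length_nil] at h4
    omega
  obtain ⟨u, hu, hmax⟩ := (c.support.tail.toFinset).exists_max_image (fun x => rk x.1)
    (by simpa [Finset.nonempty_iff_ne_empty, List.toFinset_eq_empty_iff] using htne)
  have hu' : u ∈ c.support := List.mem_of_mem_tail (List.mem_toFinset.1 hu)
  set c' := c.rotate u hu' with hc'def
  have hc' : c'.IsCycle := hc.rotate hu'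
  have hmax' : ∀ x ∈ c'.support, rk x.1 ≤ rk u.1 := by
    intro x hx
    rw [c'.support_eq_cons] at hx
    rcases List.mem_cons.1 hx with hx | hx
    · subst hx
      exact le_rfl
    · exact hmax x (List.mem_toFinset.2 (((c.support_rotate u hu').mem_iff).1 hx))
  rcases Walk.not_nil_iff.1 hc'.not_nil with ⟨w, hadj, q, hq⟩
  rw [hq] at hc'
  obtain ⟨hqpath, he⟩ := (Walk.cons_isCycle_iff q hadj).1 hc'
  have hws : w ∈ c'.support := by
    rw [hq, Walk.support_cons]
    exact List.mem_cons_of_mem _ q.start_mem_support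
  -- first edge: w is the parent of u
  have hwpar : w.1 = h u.1 ∧ u.1 ≠ ρ := by
    rcases adj_cases hadj with ⟨_, h2, h3⟩ | ⟨h1, h2, h3⟩
    · exact ⟨h3, h2⟩
    · exfalso
      have := (gp.hpar w.1 h1 h2).2.2
      rw [← h3] at this
      exact absurd (hmax' w hws) (by omega)
  -- last edge
  have hqnn : ¬q.reverse.Nil := by
    intro hnil
    rw [Walk.nil_iff_length_eq, Walk.length_reverse] at hnil
    have := hc'.three_le_length
    rw [Walk.length_cons] at this; omega
  rcases Walk.not_nil_iff.1 hqnn with ⟨w₂, hadj₂, q₂, hq₂⟩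
  have hw₂s : w₂ ∈ c'.support := by
    have : w₂ ∈ q.reverse.support := by
      rw [hq₂, Walk.support_cons]; exact List.mem_cons_of_mem _ q₂.start_mem_support
    rw [Walk.support_reverse, List.mem_reverse] at this
    rw [hq, Walk.support_cons]
    exact List.mem_cons_of_mem _ this
  have hw₂par : w₂.1 = h u.1 := by
    rcases adj_cases hadj₂ with ⟨_, h2, h3⟩ | ⟨h1, h2, h3⟩
    · exact h3
    · exfalso
      have := (gp.hpar w₂.1 h1 h2).2.2
      rw [← h3] at this
      exact absurd (hmax' w₂ hw₂s) (by omega)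
  have hww : w₂ = w := Subtype.ext (hw₂par.trans hwpar.1.symm)
  have : s(u, w₂) ∈ q.reverse.edges := by
    rw [hq₂, Walk.edges_cons]; exact List.mem_cons_self
  rw [Walk.edges_reverse, List.mem_reverse, hww] at this
  exact he this

lemma isSteinerTree : G.IsSteinerTree S (parentSub G (S ∪ I) ρ h) := by
  refine ⟨⟨gp.connected, gp.acyclic⟩, Set.subset_union_left, ?_⟩
  intro v hv hno
  by_contra hvS
  have hvI : v ∈ I := by
    rcases hv with hv | hv
    · exact absurd hv hvS
    · exact hv
  exact hno (gp.hleaf v hvI hvS)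

end GoodParent

/-- A vertex interior to a path has two distinct neighbours along it. -/
lemma two_adj {G : SimpleGraph V} {x₁ x₂ v : V} (P : G.Walk x₁ x₂) (hP : P.IsPath)
    (hv : v ∈ P.support) (h1 : v ≠ x₁) (h2 : v ≠ x₂) :
    ∃ u w, u ≠ w ∧ s(u, v) ∈ P.edges ∧ s(v, w) ∈ P.edges := by
  induction P with
  | nil => simp at hv; exact absurd hv h1
  | @cons a y c hadj q ih =>
    rw [Walk.support_cons] at hv
    rcases List.mem_cons.1 hv with rfl | hv'
    · exact absurd rfl h1
    rw [Walk.cons_isPath_iff] at hP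
    by_cases hvy : v = y
    · subst hvy
      have hq : ¬q.Nil := by
        intro hnil
        exact h2 (Walk.Nil.eq hnil)
      rcases Walk.not_nil_iff.1 hq with ⟨w, hadj', q', rfl⟩
      refine ⟨a, w, ?_, ?_, ?_⟩
      · intro haw
        apply hP.2
        rw [haw, Walk.support_cons]
        exact List.mem_cons_of_mem _ q'.start_mem_support
      · rw [Walk.edges_cons]
        exact List.mem_cons_self
      · rw [Walk.edges_cons]
        apply List.mem_cons_of_mem
        rw [Walk.edges_cons]
        exact List.mem_cons_self
    · obtain ⟨u, w, huw, he1, he2⟩ := ih hP.1 hv' hvy h2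
      exact ⟨u, w, huw, by rw [Walk.edges_cons]; exact List.mem_cons_of_mem _ he1,
        by rw [Walk.edges_cons]; exact List.mem_cons_of_mem _ he2⟩

/-- Pairwise conditions that imply complete independence of a family of parent trees. -/
lemma completelyIndependent_of {G : SimpleGraph V} (S : Set V) {ι : Type*}
    (I : ι → Set V) (ρ : ι → V) (h : ι → V → V) (rk : ι → V → ℕ)
    (gp : ∀ i, GoodParent G S (I i) (ρ i) (h i) (rk i))
    (hd : ∀ i j, i ≠ j → ∀ v, v ∈ I i → v ∈ I j → False)
    (hE1 : ∀ i j, i ≠ j → ∀ v, v ∈ S ∪ I i → v ≠ ρ i → v ∈ S ∪ I j → v ≠ ρ j →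
      h i v ≠ h j v)
    (hE2 : ∀ i j, i ≠ j → ∀ v, v ∈ S ∪ I i → v ≠ ρ i → h i v ∈ S ∪ I j → h i v ≠ ρ j →
      h j (h i v) ≠ v) :
    G.CompletelyIndependent S (fun i => parentSub G (S ∪ I i) (ρ i) (h i)) := by
  intro p q hpq
  refine ⟨?_, ?_, ?_⟩
  · ext e
    simp only [Set.mem_inter_iff, Set.mem_empty_iff_false, iff_false]
    induction e with
    | _ v w =>
      rintro ⟨hep, heq⟩
      rw [Subgraph.mem_edgeSet] at hep heq
      rcases GoodParent.adj_cases hep with ⟨p1, p2, p3⟩ | ⟨p1, p2, p3⟩ <;>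
        rcases GoodParent.adj_cases heq with ⟨q1, q2, q3⟩ | ⟨q1, q2, q3⟩
      · exact hE1 p q hpq v p1 p2 q1 q2 (p3 ▸ q3 ▸ rfl)
      · exact hE2 p q hpq v p1 p2 (p3 ▸ q1) (p3 ▸ q2) (by rw [← p3, ← q3])
      · exact hE2 q p (Ne.symm hpq) v q1 q2 (q3 ▸ p1) (q3 ▸ p2) (by rw [← q3, ← p3])
      · exact hE1 p q hpq w p1 p2 q1 q2 (p3 ▸ q3 ▸ rfl)
  · ext v
    simp only [Set.mem_inter_iff]
    constructor
    · rintro ⟨hvp, hvq⟩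
      rcases hvp with hvp | hvp
      · exact hvp
      rcases hvq with hvq | hvq
      · exact hvq
      · exact absurd hvq (fun hh => hd p q hpq v hvp hh)
    · intro hv
      exact ⟨Or.inl hv, Or.inl hv⟩
  · intro x₁ hx₁ x₂ hx₂ hne P Q hPp hQp hPin hQin v hvP hvQ
    by_contra hcon
    push_neg at hcon
    obtain ⟨u₁, w₁, huw₁, he₁, he₁'⟩ := two_adj P hPp hvP hcon.1 hcon.2
    obtain ⟨u₂, w₂, huw₂, he₂, he₂'⟩ := two_adj Q hQp hvQ hcon.1 hcon.2
    have hvIp : v ∈ I p := by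
      have h1 := Subgraph.mem_edgeSet.1 (hPin _ he₁)
      have h2 := Subgraph.mem_edgeSet.1 (hPin _ he₁')
      exact (gp p).mem_int (a := u₁) (b := w₁) huw₁ h1.symm h2
    have hvIq : v ∈ I q := by
      have h1 := Subgraph.mem_edgeSet.1 (hQin _ he₂)
      have h2 := Subgraph.mem_edgeSet.1 (hQin _ he₂')
      exact (gp q).mem_int (a := u₂) (b := w₂) huw₂ h1.symm h2
    exact hd p q hpq v hvIp hvIq

variable [Fintype V] [DecidableEq V]

/-- every Steiner tree for a set with at least two elements has an edge -/
lemma steiner_edge_nonempty {G : SimpleGraph V} {S : Set V} (hS : 2 ≤ S.ncard)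
    {T : G.Subgraph} (hT : G.IsSteinerTree S T) : T.edgeSet.Nonempty := by
  obtain ⟨s₁, hs₁, s₂, hs₂, hss⟩ := (Set.one_lt_ncard (S.toFinite)).1 hS
  have hv₁ : s₁ ∈ T.verts := hT.2.1 hs₁
  have hv₂ : s₂ ∈ T.verts := hT.2.1 hs₂
  obtain ⟨W⟩ := hT.1.isConnected.preconnected ⟨s₁, hv₁⟩ ⟨s₂, hv₂⟩
  have hWnn : ¬W.Nil := by
    intro hnil
    exact hss (congrArg Subtype.val (Walk.Nil.eq hnil))
  rcases Walk.not_nil_iff.1 hWnn with ⟨u, hadj, _, _⟩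
  exact ⟨s(s₁, u.1), Subgraph.mem_edgeSet.2 hadj⟩

lemma le_cisstPacking {G : SimpleGraph V} {S : Set V} (hS : 2 ≤ S.ncard)
    {ι : Type*} [Fintype ι] (Ts : ι → G.Subgraph)
    (hst : ∀ i, G.IsSteinerTree S (Ts i)) (hci : G.CompletelyIndependent S Ts) :
    Fintype.card ι ≤ G.cisstPacking S := by
  classical
  have key : ∀ (m : ℕ) (Us : Fin m → G.Subgraph), (∀ i, G.IsSteinerTree S (Us i)) →
      G.CompletelyIndependent S Us → m ≤ Fintype.card (Sym2 V) := by
    intro m Us hst' hci'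
    have hne : ∀ i, (Us i).edgeSet.Nonempty := fun i => steiner_edge_nonempty hS (hst' i)
    set f : Fin m → Sym2 V := fun i => (hne i).choose with hf
    have hinj : Function.Injective f := by
      intro i j hij
      by_contra hne'
      have h1 : f i ∈ (Us i).edgeSet := (hne i).choose_spec
      have h2 : f j ∈ (Us j).edgeSet := (hne j).choose_spec
      rw [hij] at h1
      have h3 := (hci' i j hne').1
      have h4 : f j ∈ (Us i).edgeSet ∩ (Us j).edgeSet := ⟨h1, h2⟩
      rw [h3] at h4
      exact h4
    simpa using Fintype.card_le_of_injective _ hinj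
  have hmem : Fintype.card ι ∈ {k | ∃ Ts : Fin k → G.Subgraph,
      (∀ i, G.IsSteinerTree S (Ts i)) ∧ G.CompletelyIndependent S Ts} := by
    refine ⟨Ts ∘ (Fintype.equivFin ι).symm, fun i => hst _, ?_⟩
    intro p q hpq
    exact hci _ _ (fun hh => hpq ((Fintype.equivFin ι).symm.injective hh))
  exact le_csSup ⟨Fintype.card (Sym2 V), fun k hk => by
    obtain ⟨Us, h1, h2⟩ := hk; exact key k Us h1 h2⟩ hmem

lemma genConnStar_attained {G : SimpleGraph V} {s : ℕ} (hs : s ≤ Fintype.card V) :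
    ∃ S₀ : Set V, S₀.ncard = s ∧ G.genConnStar s = G.cisstPacking S₀ := by
  have hne : (G.cisstPacking '' {S : Set V | S.ncard = s}).Nonempty := by
    obtain ⟨S₀, _, hS₀⟩ := Set.exists_subset_card_eq (s := (Set.univ : Set V)) (n := s) (by
      rw [Set.ncard_univ, Nat.card_eq_fintype_card]; exact hs)
    exact ⟨G.cisstPacking S₀, ⟨S₀, hS₀, rfl⟩⟩
  obtain ⟨S₀, hS₀, h⟩ := Nat.sInf_mem hne
  exact ⟨S₀, hS₀, h.symm⟩


lemma family_packing {G : SimpleGraph V} {S : Set V} (hS : 2 ≤ S.ncard)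
    {ι : Type*} [Fintype ι]
    (I : ι → Set V) (ρ : ι → V) (h : ι → V → V) (rk : ι → V → ℕ)
    (gp : ∀ i, GoodParent G S (I i) (ρ i) (h i) (rk i))
    (hd : ∀ i j, i ≠ j → ∀ v, v ∈ I i → v ∈ I j → False)
    (hE1 : ∀ i j, i ≠ j → ∀ v, v ∈ S ∪ I i → v ≠ ρ i → v ∈ S ∪ I j → v ≠ ρ j →
      h i v ≠ h j v)
    (hE2 : ∀ i j, i ≠ j → ∀ v, v ∈ S ∪ I i → v ≠ ρ i → h i v ∈ S ∪ I j → h i v ≠ ρ j →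
      h j (h i v) ≠ v) :
    Fintype.card ι ≤ G.cisstPacking S :=
  le_cisstPacking hS _ (fun i => (gp i).isSteinerTree)
    (completelyIndependent_of S I ρ h rk gp hd hE1 hE2)
variable [Fintype V] [DecidableEq V]

/-- helper: vertices on different sides are distinct -/
lemma side_ne {P : V → Bool} {u w : V} (hu : P u = true) (hw : P w = false) : u ≠ w := by
  intro h; rw [h, hw] at hu; exact Bool.noConfusion hu

/-- The family of stars: terminals all on the `false` side, centers distinct
vertices on the `true` side outside `S`. -/
lemma star_family {P : V → Bool} {S : Set V} (hS : 2 ≤ S.ncard)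
    (hside : ∀ v ∈ S, P v = false) {k : ℕ} (c : Fin k → V)
    (hcinj : Function.Injective c) (hcX : ∀ i, P (c i) = true) (hcS : ∀ i, c i ∉ S) :
    k ≤ (bipG P).cisstPacking S := by
  have hSne : ∃ s₁ ∈ S, ∃ s₂ ∈ S, s₁ ≠ s₂ := by
    obtain ⟨s₁, hs₁, s₂, hs₂, h12⟩ := (Set.one_lt_ncard (S.toFinite)).1 hS
    exact ⟨s₁, hs₁, s₂, hs₂, h12⟩
  have key := family_packing (G := bipG P) hS (ι := Fin k)
    (fun i => {c i}) (fun i => c i) (fun i _ => c i)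
    (fun i v => if v = c i then 0 else 1) ?_ ?_ ?_ ?_
  · simpa using key
  · -- GoodParent
    intro i
    refine ⟨Or.inr rfl, ?_, ?_⟩
    · intro v hv hvρ
      have hvS : v ∈ S := by
        rcases hv with hv | hv
        · exact hv
        · exact absurd hv hvρ
      refine ⟨rfl, ?_, ?_⟩
      · rw [bipG_adj, hside v hvS, hcX i]
        exact fun h => Bool.noConfusion h
      · simp [hvρ]
    · intro v hv _
      rw [Set.mem_singleton_iff] at hv
      subst hv
      obtain ⟨s₁, hs₁, s₂, hs₂, h12⟩ := hSne
      have hadj : ∀ z ∈ S, (parentSub (bipG P) (S ∪ {c i}) (c i) (fun _ => c i)).Adj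
          (c i) z := by
        intro z hz
        refine ⟨?_, Or.inr ⟨Or.inl hz, Or.inr rfl, ?_, rfl⟩⟩
        · rw [bipG_adj, hside z hz, hcX i]
          exact fun h => Bool.noConfusion h
        · exact fun h => hcS i (h ▸ hz)
      exact ⟨s₁, s₂, h12, hadj s₁ hs₁, hadj s₂ hs₂⟩
  · intro i j hij v hvi hvj
    rw [Set.mem_singleton_iff] at hvi hvj
    exact hij (hcinj (hvi ▸ hvj ▸ rfl))
  · intro i j hij v _ _ _ _
    exact fun h => hij (hcinj h)
  · intro i j hij v _ _ hw _
    rcases hw with hw | hw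
    · exact absurd hw (hcS i)
    · rw [Set.mem_singleton_iff] at hw
      exact absurd (hcinj hw) hij

/-- The family of double stars with centers `x i` (on the `true` side, anywhere)
and `y i` (on the `false` side, outside `S`). -/
lemma doubleStar_family {P : V → Bool} {S : Set V} (hS : 2 ≤ S.ncard)
    (hA : ∃ u₁ ∈ S, ∃ u₂ ∈ S, P u₁ = true ∧ P u₂ = true ∧ u₁ ≠ u₂)
    (hB : ∃ z ∈ S, P z = false)
    {k : ℕ} (x y : Fin k → V)
    (hxinj : Function.Injective x) (hxX : ∀ i, P (x i) = true)
    (hyinj : Function.Injective y) (hyY : ∀ i, P (y i) = false) (hyS : ∀ i, y i ∉ S) :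
    k ≤ (bipG P).cisstPacking S := by
  set h : Fin k → V → V := fun i v => if P v then y i else x i with hdef
  have hyx : ∀ i, y i ≠ x i := fun i => (side_ne (hxX i) (hyY i)).symm
  have hhvy : ∀ i v, P v = true → h i v = y i := by
    intro i v hPv; simp [hdef, hPv]
  have hhvx : ∀ i v, P v = false → h i v = x i := by
    intro i v hPv; simp [hdef, hPv]
  have key := family_packing (G := bipG P) hS (ι := Fin k)
    (fun i => {x i, y i}) (fun i => x i) h
    (fun i v => if v = x i then 0 else if v = y i then 1 else 2) ?_ ?_ ?_ ?_
  · simpa using key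
  · intro i
    refine ⟨Or.inr (Or.inl rfl), ?_, ?_⟩
    · intro v hv hvρ
      by_cases hPv : P v
      · have hvy : v ≠ y i := side_ne hPv (hyY i)
        rw [hhvy i v hPv]
        refine ⟨by simp, ?_, ?_⟩
        · rw [bipG_adj, hPv, hyY i]; simp
        · show (if y i = x i then (0:ℕ) else if y i = y i then 1 else 2) <
            (if v = x i then (0:ℕ) else if v = y i then 1 else 2)
          rw [if_neg (hyx i), if_pos rfl, if_neg (show ¬ (v = x i) from hvρ),
            if_neg (show ¬ (v = y i) from hvy)]
          omega
      · simp only [Bool.not_eq_true] at hPv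
        rw [hhvx i v hPv]
        refine ⟨by simp, ?_, ?_⟩
        · rw [bipG_adj, hPv, hxX i]; simp
        · show (if x i = x i then (0:ℕ) else if x i = y i then 1 else 2) <
            (if v = x i then (0:ℕ) else if v = y i then 1 else 2)
          rw [if_pos (rfl : x i = x i), if_neg (show ¬ (v = x i) from hvρ)]
          split <;> omega
    · intro v hv hvS
      obtain ⟨u₁, hu₁, u₂, hu₂, hPu₁, hPu₂, h12⟩ := hA
      obtain ⟨z, hz, hPz⟩ := hB
      rcases hv with hv | hv
      · -- v = x i ∉ S : two children z and y i
        subst hv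
        have hzx : z ≠ x i := fun hh => hvS (hh ▸ hz)
        have hzy : z ≠ y i := fun hh => (hyS i) (hh ▸ hz)
        refine ⟨z, y i, hzy, ?_, ?_⟩
        · refine ⟨?_, Or.inr ⟨Or.inl hz, ?_, hzx, (hhvx i z hPz).symm⟩⟩
          · rw [bipG_adj, hxX i, hPz]; simp
          · rw [hhvx i z hPz]; exact Or.inr (Or.inl rfl)
        · refine ⟨?_, Or.inr ⟨Or.inr (Or.inr rfl), ?_, hyx i, (hhvx i (y i) (hyY i)).symm⟩⟩
          · rw [bipG_adj, hxX i, hyY i]; simp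
          · rw [hhvx i (y i) (hyY i)]; exact Or.inr (Or.inl rfl)
      · -- v = y i : parent x i and one child in A
        rw [Set.mem_singleton_iff] at hv
        subst hv
        set u := if u₁ = x i then u₂ else u₁ with hu
        have huS : u ∈ S := by rw [hu]; split <;> assumption
        have hPu : P u = true := by rw [hu]; split <;> assumption
        have hux : u ≠ x i := by
          rw [hu]; split
          · rename_i hh; rw [← hh]; exact Ne.symm h12
          · assumption
        refine ⟨x i, u, Ne.symm hux, ?_, ?_⟩
        · refine ⟨?_, Or.inl ⟨Or.inr (Or.inr rfl), ?_, hyx i, (hhvx i (y i) (hyY i)).symm⟩⟩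
          · rw [bipG_adj, hyY i, hxX i]; simp
          · rw [hhvx i (y i) (hyY i)]; exact Or.inr (Or.inl rfl)
        · refine ⟨?_, Or.inr ⟨Or.inl huS, ?_, hux, (hhvy i u hPu).symm⟩⟩
          · rw [bipG_adj, hyY i, hPu]; simp
          · rw [hhvy i u hPu]; exact Or.inr (Or.inr rfl)
  · -- internal sets disjoint
    intro i j hij v hvi hvj
    rcases hvi with hvi | hvi <;> rcases hvj with hvj | hvj
    · exact hij (hxinj (hvi ▸ hvj ▸ rfl))
    · rw [Set.mem_singleton_iff] at hvj
      exact side_ne (hxX i) (hyY j) (hvi.symm.trans hvj)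
    · rw [Set.mem_singleton_iff] at hvi
      exact side_ne (hxX j) (hyY i) (hvj.symm.trans hvi)
    · rw [Set.mem_singleton_iff] at hvi hvj
      exact hij (hyinj (hvi ▸ hvj ▸ rfl))
  · -- E1
    intro i j hij v _ _ _ _
    by_cases hPv : P v
    · rw [hhvy i v hPv, hhvy j v hPv]
      exact fun hh => hij (hyinj hh)
    · simp only [Bool.not_eq_true] at hPv
      rw [hhvx i v hPv, hhvx j v hPv]
      exact fun hh => hij (hxinj hh)
  · -- E2
    intro i j hij v hv hvρ hw hwρ
    by_cases hPv : P v
    · rw [hhvy i v hPv] at hw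
      exfalso
      rcases hw with hw | hw
      · exact hyS i hw
      rcases hw with hw | hw
      · exact side_ne (hxX j) (hyY i) hw.symm
      · rw [Set.mem_singleton_iff] at hw
        exact hij (hyinj hw)
    · simp only [Bool.not_eq_true] at hPv
      rw [hhvx i v hPv]
      rw [hhvy j (x i) (hxX i)]
      intro hh
      rcases hv with hv | hv
      · exact hyS j (hh ▸ hv)
      rcases hv with hv | hv
      · exact side_ne (hv ▸ hxX i) (hyY j) (hv.symm ▸ hh.symm)
      · rw [Set.mem_singleton_iff] at hv
        exact hij (hyinj (hh.trans hv).symm)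


/-- The mixed family: tree `i` has X-side internal vertices `{x0 i, x1 i}` (either a
single vertex outside `S` or a pair inside `S`) and Y-side internal vertices
`{y0 i, y1 i}` (likewise). -/
lemma mixed_family {P : V → Bool} {S : Set V} (hS : 2 ≤ S.ncard)
    (hAne : ∃ u ∈ S, P u = true) (hBne : ∃ z ∈ S, P z = false)
    {k : ℕ} (x0 x1 y0 y1 : Fin k → V)
    (hx0 : ∀ i, P (x0 i) = true) (hx1 : ∀ i, P (x1 i) = true)
    (hy0 : ∀ i, P (y0 i) = false) (hy1 : ∀ i, P (y1 i) = false)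
    (hX : ∀ i j, i ≠ j → x0 i ≠ x0 j ∧ x0 i ≠ x1 j ∧ x1 i ≠ x0 j ∧ x1 i ≠ x1 j)
    (hY : ∀ i j, i ≠ j → y0 i ≠ y0 j ∧ y0 i ≠ y1 j ∧ y1 i ≠ y0 j ∧ y1 i ≠ y1 j)
    (htX : ∀ i, (x0 i = x1 i ∧ x0 i ∉ S) ∨ (x0 i ≠ x1 i ∧ x0 i ∈ S ∧ x1 i ∈ S))
    (htY : ∀ i, (y0 i = y1 i ∧ y0 i ∉ S) ∨ (y0 i ≠ y1 i ∧ y0 i ∈ S ∧ y1 i ∈ S)) :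
    k ≤ (bipG P).cisstPacking S := by
  classical
  set I : Fin k → Set V := fun i => {x0 i, x1 i, y0 i, y1 i} with hIdef
  set CX : Fin k → V → Prop := fun i v => ∃ l, l ≠ i ∧ v = x1 l ∧ x0 l ≠ x1 l with hCX
  set CY : Fin k → V → Prop := fun i v => ∃ l, l ≠ i ∧ v = y0 l ∧ y0 l ≠ y1 l with hCY
  set h : Fin k → V → V := fun i v =>
    if P v then (if CX i v then y1 i else y0 i)
    else (if CY i v then x1 i else x0 i) with hdef
  have hhT : ∀ i v, P v = true → h i v = if CX i v then y1 i else y0 i := by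
    intro i v hPv; simp [hdef, hPv]
  have hhF : ∀ i v, P v = false → h i v = if CY i v then x1 i else x0 i := by
    intro i v hPv; simp [hdef, hPv]
  have hmx0 : ∀ i, x0 i ∈ I i := fun i => Or.inl rfl
  have hmx1 : ∀ i, x1 i ∈ I i := fun i => Or.inr (Or.inl rfl)
  have hmy0 : ∀ i, y0 i ∈ I i := fun i => Or.inr (Or.inr (Or.inl rfl))
  have hmy1 : ∀ i, y1 i ∈ I i := fun i => Or.inr (Or.inr (Or.inr rfl))
  -- value of h on Y-side internal vertices of the same tree: the root
  have hown : ∀ i v, v = y0 i ∨ v = y1 i → h i v = x0 i := by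
    intro i v hv
    have hPv : P v = false := by rcases hv with rfl | rfl; exacts [hy0 i, hy1 i]
    rw [hhF i v hPv, if_neg]
    rintro ⟨l, hli, rfl, hstl⟩
    rcases hv with hv | hv
    · exact (hY l i hli).1 hv
    · exact (hY l i hli).2.1 hv
  -- h i v is on the opposite side and in I i
  have hmem : ∀ i v, h i v ∈ I i := by
    intro i v
    by_cases hPv : P v
    · rw [hhT i v hPv]; split
      · exact hmy1 i
      · exact hmy0 i
    · rw [hhF i v (by simpa using hPv)]; split
      · exact hmx1 i
      · exact hmx0 i
  have hadj : ∀ i v, (bipG P).Adj v (h i v) := by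
    intro i v
    rw [bipG_adj]
    by_cases hPv : P v
    · rw [hhT i v hPv, hPv]
      split
      · rw [hy1 i]; simp
      · rw [hy0 i]; simp
    · simp only [Bool.not_eq_true] at hPv
      rw [hhF i v hPv, hPv]
      split
      · rw [hx1 i]; simp
      · rw [hx0 i]; simp
  -- rank
  set rk : Fin k → V → ℕ := fun i v =>
    if v = x0 i then 0 else if v = y0 i ∨ v = y1 i then 1 else if v = x1 i then 2 else 3
      with hrkdef
  have hrk_x0 : ∀ i, rk i (x0 i) = 0 := by intro i; simp [hrkdef]
  have hrk_y : ∀ i v, v = y0 i ∨ v = y1 i → rk i v = 1 := by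
    intro i v hv
    have h1 : v ≠ x0 i := by
      rcases hv with rfl | rfl
      · exact (side_ne (hx0 i) (hy0 i)).symm
      · exact (side_ne (hx0 i) (hy1 i)).symm
    simp [hrkdef, h1, hv]
  have hrk_x1 : ∀ i, rk i (x1 i) ≤ 2 := by
    intro i
    by_cases h1 : x1 i = x0 i
    · simp [hrkdef, h1]
    · have h2 : ¬(x1 i = y0 i ∨ x1 i = y1 i) := by
        rintro (h3 | h3)
        · exact side_ne (hx1 i) (hy0 i) h3
        · exact side_ne (hx1 i) (hy1 i) h3
      simp [hrkdef, h1, h2]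
  have hrk_T : ∀ i v, P v = true → v ≠ x0 i → v ≠ x1 i → rk i v = 3 := by
    intro i v hPv h1 h2
    have h3 : ¬(v = y0 i ∨ v = y1 i) := by
      rintro (h4 | h4)
      · exact side_ne hPv (hy0 i) h4
      · exact side_ne hPv (hy1 i) h4
    simp [hrkdef, h1, h2, h3]
  have hrk_F : ∀ i v, P v = false → ¬(v = y0 i ∨ v = y1 i) → rk i v = 3 := by
    intro i v hPv h3
    have h1 : v ≠ x0 i := fun hh => side_ne (hx0 i) hPv hh.symm
    have h2 : v ≠ x1 i := fun hh => side_ne (hx1 i) hPv hh.symm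
    simp [hrkdef, h1, h2, h3]
  have key := family_packing (G := bipG P) hS (ι := Fin k) I (fun i => x0 i) h rk ?_ ?_ ?_ ?_
  · simpa using key
  · -- GoodParent
    intro i
    refine ⟨Or.inr (hmx0 i), ?_, ?_⟩
    · intro v hv hvρ
      refine ⟨hmem i v, hadj i v, ?_⟩
      by_cases hPv : P v
      · have h1 : rk i (h i v) = 1 := by
          apply hrk_y
          rw [hhT i v hPv]
          split
          · exact Or.inr rfl
          · exact Or.inl rfl
        rw [h1]
        by_cases h2 : v = x1 i
        · have hne : ¬ (x1 i = x0 i) := fun hh => hvρ (h2.trans hh)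
          have h3 : ¬(x1 i = y0 i ∨ x1 i = y1 i) := by
            rintro (h4 | h4)
            · exact side_ne (hx1 i) (hy0 i) h4
            · exact side_ne (hx1 i) (hy1 i) h4
          have : rk i v = 2 := by
            simp [hrkdef, h2, hne, h3]
          omega
        · rw [hrk_T i v hPv hvρ h2]; omega
      · simp only [Bool.not_eq_true] at hPv
        by_cases h2 : v = y0 i ∨ v = y1 i
        · rw [hown i v h2, hrk_x0 i, hrk_y i v h2]; omega
        · rw [hrk_F i v hPv h2]
          rw [hhF i v hPv]
          split
          · have := hrk_x1 i; omega
          · rw [hrk_x0 i]; omega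
    · -- leaves
      intro v hvI hvS
      obtain ⟨u, huS, hPu⟩ := hAne
      obtain ⟨z, hzS, hPz⟩ := hBne
      set T := parentSub (bipG P) (S ∪ I i) (x0 i) (h i) with hTdef
      -- child adjacency helper
      have child : ∀ w, w ∈ S ∪ I i → w ≠ x0 i → T.Adj (h i w) w := by
        intro w hw hwρ
        exact ⟨(hadj i w).symm, Or.inr ⟨hw, Or.inr (hmem i w), hwρ, rfl⟩⟩
      have parent : ∀ w, w ∈ S ∪ I i → w ≠ x0 i → T.Adj w (h i w) := by
        intro w hw hwρ
        exact ⟨hadj i w, Or.inl ⟨hw, Or.inr (hmem i w), hwρ, rfl⟩⟩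
      -- case analysis on which internal vertex v is
      have hxsing : x0 i ∉ S → x0 i = x1 i := by
        intro hns
        rcases htX i with ⟨he, _⟩ | ⟨_, hin, _⟩
        · exact he
        · exact absurd hin hns
      have main0 : v = x0 i → ∃ a b, a ≠ b ∧ T.Adj v a ∧ T.Adj v b := by
        intro hv
        subst hv
        rcases htY i with ⟨hsy, hnsy⟩ | ⟨hsty, hy0S, hy1S⟩
        · -- Y single: children y0 i and z
          have hz : h i z = x0 i := by
            rw [hhF i z hPz]
            split
            · rcases htX i with ⟨he, _⟩ | ⟨_, hin, _⟩
              · exact he.symm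
              · exact absurd hin hvS
            · rfl
          have hzρ : z ≠ x0 i := fun hh => hvS (hh ▸ hzS)
          have h1 : T.Adj (x0 i) z := by
            have := child z (Or.inl hzS) hzρ
            rwa [hz] at this
          have h2 : T.Adj (x0 i) (y0 i) := by
            have := child (y0 i) (Or.inr (hmy0 i)) (side_ne (hx0 i) (hy0 i)).symm
            rwa [hown i (y0 i) (Or.inl rfl)] at this
          exact ⟨z, y0 i, fun hh => (hnsy (hh ▸ hzS)), h1, h2⟩
        · -- Y pair: children y0 i and y1 i
          have h1 : T.Adj (x0 i) (y0 i) := by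
            have := child (y0 i) (Or.inr (hmy0 i)) (side_ne (hx0 i) (hy0 i)).symm
            rwa [hown i (y0 i) (Or.inl rfl)] at this
          have h2 : T.Adj (x0 i) (y1 i) := by
            have := child (y1 i) (Or.inr (hmy1 i)) (side_ne (hx0 i) (hy1 i)).symm
            rwa [hown i (y1 i) (Or.inr rfl)] at this
          exact ⟨y0 i, y1 i, hsty, h1, h2⟩
      have mainy : v = y0 i → v ∉ S → ∃ a b, a ≠ b ∧ T.Adj v a ∧ T.Adj v b := by
        intro hv hvS'
        subst hv
        have hpar : T.Adj (y0 i) (x0 i) := by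
          have := parent (y0 i) (Or.inr (hmy0 i)) (side_ne (hx0 i) (hy0 i)).symm
          rwa [hown i (y0 i) (Or.inl rfl)] at this
        rcases htX i with ⟨hsx, hnsx⟩ | ⟨hstx, hx0S, hx1S⟩
        · -- X single: second neighbour is u ∈ S ∩ X
          have hys : y0 i = y1 i := by
            rcases htY i with ⟨he, _⟩ | ⟨_, hin, _⟩
            · exact he
            · exact absurd hin hvS'
          have hu : h i u = y0 i := by
            rw [hhT i u hPu]
            split
            · exact hys.symm
            · rfl
          have huρ : u ≠ x0 i := fun hh => hnsx (hh ▸ huS)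
          have h1 : T.Adj (y0 i) u := by
            have := child u (Or.inl huS) huρ
            rwa [hu] at this
          exact ⟨x0 i, u, fun hh => hnsx (hh ▸ huS), hpar, h1⟩
        · -- X pair: second neighbour is x1 i
          have hys : y0 i = y1 i := by
            rcases htY i with ⟨he, _⟩ | ⟨_, hin, _⟩
            · exact he
            · exact absurd hin hvS'
          have hx1v : h i (x1 i) = y0 i := by
            rw [hhT i (x1 i) (hx1 i), if_neg]
            · rintro ⟨l, hli, he, _⟩
              exact (hX i l (fun hh => hli hh.symm)).2.2.2 he
          have h1 : T.Adj (y0 i) (x1 i) := by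
            have := child (x1 i) (Or.inr (hmx1 i)) (fun hh => hstx hh.symm)
            rwa [hx1v] at this
          exact ⟨x0 i, x1 i, hstx, hpar, h1⟩
      rcases hvI with hv | hv | hv | hv
      · exact main0 hv
      · -- v = x1 i: must be the single case
        have hsx : x0 i = x1 i := by
          rcases htX i with ⟨he, _⟩ | ⟨_, _, hin⟩
          · exact he
          · exact absurd (hv ▸ hin) hvS
        exact main0 (hv.trans hsx.symm)
      · exact mainy hv hvS
      · -- v = y1 i: must be the single case
        have hsy : y0 i = y1 i := by
          rcases htY i with ⟨he, _⟩ | ⟨_, _, hin⟩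
          · exact he
          · exact absurd (hv ▸ hin) hvS
        exact mainy (hv.trans hsy.symm) hvS
  · -- internal sets pairwise disjoint
    intro i j hij v hvi hvj
    obtain ⟨hx00, hx01, hx10, hx11⟩ := hX i j hij
    obtain ⟨hy00, hy01, hy10, hy11⟩ := hY i j hij
    rcases hvi with rfl | rfl | rfl | rfl <;> rcases hvj with hh | hh | hh | hh <;>
      first
        | exact hx00 hh | exact hx01 hh | exact hx10 hh | exact hx11 hh
        | exact hy00 hh | exact hy01 hh | exact hy10 hh | exact hy11 hh
        | exact side_ne (hx0 i) (hy0 j) hh | exact side_ne (hx0 i) (hy1 j) hh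
        | exact side_ne (hx1 i) (hy0 j) hh | exact side_ne (hx1 i) (hy1 j) hh
        | exact side_ne (hx0 j) (hy0 i) hh.symm | exact side_ne (hx1 j) (hy0 i) hh.symm
        | exact side_ne (hx0 j) (hy1 i) hh.symm | exact side_ne (hx1 j) (hy1 i) hh.symm
  · -- E1
    intro i j hij v _ _ _ _
    obtain ⟨hx00, hx01, hx10, hx11⟩ := hX i j hij
    obtain ⟨hy00, hy01, hy10, hy11⟩ := hY i j hij
    by_cases hPv : P v
    · rw [hhT i v hPv, hhT j v hPv]
      split <;> split
      · exact hy11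
      · exact hy10
      · exact hy01
      · exact hy00
    · simp only [Bool.not_eq_true] at hPv
      rw [hhF i v hPv, hhF j v hPv]
      split <;> split
      · exact hx11
      · exact hx10
      · exact hx01
      · exact hx00
  · -- E2
    intro i j hij v hv hvρ hw hwρ
    by_cases hPv : P v
    · -- v on the X side, w := h i v ∈ {y0 i, y1 i}
      rcases htY i with ⟨hsy, hnsy⟩ | ⟨hsty, hy0S, hy1S⟩
      · -- Y single: w ∉ S and w ∉ I j : contradiction with hw
        exfalso
        have hw1 : h i v = y0 i := by
          rw [hhT i v hPv]
          split
          · exact hsy.symm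
          · rfl
        rw [hw1] at hw
        rcases hw with hw | hw | hw | hw | hw
        · exact hnsy hw
        · exact side_ne (hx0 j) (hy0 i) hw.symm
        · exact side_ne (hx1 j) (hy0 i) hw.symm
        · exact (hY i j hij).1 hw
        · exact (hY i j hij).2.1 hw
      · rw [hhT i v hPv]
        by_cases hC : CX i v
        · rw [if_pos hC]
          -- h j (y1 i) = x0 j
          have hjw : h j (y1 i) = x0 j := by
            rw [hhF j (y1 i) (hy1 i), if_neg]
            rintro ⟨l, hlj, he, hstl⟩
            by_cases hli : l = i
            · subst hli
              exact hsty he.symm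
            · exact (hY i l (fun hh => hli hh.symm)).2.2.1 he
          rw [hjw]
          obtain ⟨l, hli, rfl, hstl⟩ := hC
          by_cases hlj : l = j
          · subst hlj
            exact fun hh => hstl hh
          · exact fun hh => (hX j l (fun h5 => hlj h5.symm)).2.1 hh
        · rw [if_neg hC]
          have hjw : h j (y0 i) = x1 j := by
            rw [hhF j (y0 i) (hy0 i), if_pos ⟨i, hij, rfl, hsty⟩]
          rw [hjw]
          intro he
          rcases htX j with ⟨hsx, hnsx⟩ | ⟨hstx, hx0S, hx1S⟩
          · -- x1 j outside S: v ∈ S ∪ I i impossible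
            rw [← he, ← hsx] at hv hvρ
            rcases hv with hv | hv | hv | hv | hv
            · exact hnsx hv
            · exact hvρ hv
            · exact (hX j i (fun hh => hij hh.symm)).2.1 hv
            · exact side_ne (hx0 j) (hy0 i) hv
            · exact side_ne (hx0 j) (hy1 i) hv
          · exact hC ⟨j, fun hh => hij hh.symm, he.symm, hstx⟩
    · simp only [Bool.not_eq_true] at hPv
      rcases htX i with ⟨hsx, hnsx⟩ | ⟨hstx, hx0S, hx1S⟩
      · -- X single: w ∉ S and w ∉ I j : contradiction
        exfalso
        have hw1 : h i v = x0 i := by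
          rw [hhF i v hPv]
          split
          · exact hsx.symm
          · rfl
        rw [hw1] at hw
        rcases hw with hw | hw | hw | hw | hw
        · exact hnsx hw
        · exact (hX i j hij).1 hw
        · exact (hX i j hij).2.1 hw
        · exact side_ne (hx0 i) (hy0 j) hw
        · exact side_ne (hx0 i) (hy1 j) hw
      · rw [hhF i v hPv]
        by_cases hC : CY i v
        · rw [if_pos hC]
          have hjw : h j (x1 i) = y1 j := by
            rw [hhT j (x1 i) (hx1 i), if_pos ⟨i, hij, rfl, hstx⟩]
          rw [hjw]
          obtain ⟨l, hli, rfl, hstl⟩ := hC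
          by_cases hlj : l = j
          · subst hlj
            exact fun hh => hstl hh.symm
          · exact fun hh => (hY j l (fun h5 => hlj h5.symm)).2.2.1 hh
        · rw [if_neg hC]
          have hjw : h j (x0 i) = y0 j := by
            rw [hhT j (x0 i) (hx0 i), if_neg]
            rintro ⟨l, hlj, he, hstl⟩
            by_cases hli : l = i
            · subst hli
              exact hstx he
            · exact (hX i l (fun hh => hli hh.symm)).2.1 he
          rw [hjw]
          intro he
          rcases htY j with ⟨hsy, hnsy⟩ | ⟨hsty, hy0S, hy1S⟩
          · -- y0 j outside S: v ∈ S ∪ I i impossible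
            rw [← he] at hv
            rcases hv with hv | hv | hv | hv | hv
            · exact hnsy hv
            · exact side_ne (hx0 i) (hy0 j) hv.symm
            · exact side_ne (hx1 i) (hy0 j) hv.symm
            · exact (hY j i (fun hh => hij hh.symm)).1 hv
            · exact (hY j i (fun hh => hij hh.symm)).2.1 hv
          · exact hC ⟨j, fun hh => hij hh.symm, he.symm, hsty⟩


lemma exists_inj {T : Set V} {k : ℕ} (hk : k ≤ T.ncard) :
    ∃ f : Fin k → V, Function.Injective f ∧ ∀ i, f i ∈ T := by
  classical
  rw [Set.ncard_eq_toFinset_card'] at hk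
  obtain ⟨t, hts, htc⟩ := Finset.exists_subset_card_eq hk
  set e := t.equivFinOfCardEq htc
  refine ⟨fun i => (e.symm i : V), ?_, ?_⟩
  · intro i j hij
    exact e.symm.injective (Subtype.ext hij)
  · intro i
    have := (e.symm i).2
    have h2 := hts this
    rwa [Set.mem_toFinset] at h2

lemma mixed_counts {P : V → Bool} {S : Set V} (hS : 2 ≤ S.ncard)
    {t p r : ℕ}
    (hξ : t ≤ (({v | P v = true} \ S : Set V)).ncard)
    (hη : t + p ≤ (({v | P v = false} \ S : Set V)).ncard)
    (hα : 2*(p+r) ≤ ((S ∩ {v | P v = true} : Set V)).ncard)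
    (hβ : 2*r ≤ ((S ∩ {v | P v = false} : Set V)).ncard)
    (hAne : 1 ≤ ((S ∩ {v | P v = true} : Set V)).ncard)
    (hBne : 1 ≤ ((S ∩ {v | P v = false} : Set V)).ncard) :
    t + p + r ≤ (bipG P).cisstPacking S := by
  classical
  obtain ⟨ξ, hξi, hξm⟩ := exists_inj hξ
  obtain ⟨η, hηi, hηm⟩ := exists_inj hη
  obtain ⟨α, hαi, hαm⟩ := exists_inj hα
  obtain ⟨β, hβi, hβm⟩ := exists_inj hβ
  have hAne' : ∃ u ∈ S, P u = true := by
    obtain ⟨u, hu⟩ := Set.nonempty_of_ncard_ne_zero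
      (s := (S ∩ {v | P v = true} : Set V)) (by omega)
    exact ⟨u, hu.1, hu.2⟩
  have hBne' : ∃ u ∈ S, P u = false := by
    obtain ⟨u, hu⟩ := Set.nonempty_of_ncard_ne_zero
      (s := (S ∩ {v | P v = false} : Set V)) (by omega)
    exact ⟨u, hu.1, hu.2⟩
  set k := t + p + r with hk
  -- X-side data
  set Θx : Fin t ⊕ Fin (2*(p+r)) → V := Sum.elim ξ α with hΘxdef
  have hΘx : ∀ u v, u ≠ v → Θx u ≠ Θx v := by
    rintro (u | u) (v | v) huv hh
    · exact huv (congrArg Sum.inl (hξi hh))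
    · have hh' : ξ u = α v := hh
      exact (hξm u).2 (by rw [hh']; exact (hαm v).1)
    · have hh' : α u = ξ v := hh
      exact (hξm v).2 (by rw [← hh']; exact (hαm u).1)
    · exact huv (congrArg Sum.inr (hαi hh))
  have hl1 : ∀ (i : Fin k) (b : Bool), ¬ (i:ℕ) < t →
      2*((i:ℕ)-t) + (if b then 1 else 0) < 2*(p+r) := by
    intro i b hi
    have := i.2
    rcases b <;> simp <;> omega
  set σ : Bool → Fin k → Fin t ⊕ Fin (2*(p+r)) := fun b i =>
    if h : (i:ℕ) < t then Sum.inl ⟨i, h⟩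
    else Sum.inr ⟨2*((i:ℕ)-t) + (if b then 1 else 0), hl1 i b h⟩ with hσdef
  have hσne : ∀ (b b' : Bool) (i j : Fin k), (i:ℕ) ≠ (j:ℕ) → σ b i ≠ σ b' j := by
    intro b b' i j hij
    rw [hσdef]; dsimp only
    by_cases hi : (i:ℕ) < t <;> by_cases hj : (j:ℕ) < t
    · rw [dif_pos hi, dif_pos hj]
      intro hh
      have h5 : (⟨(i:ℕ), hi⟩ : Fin t) = ⟨(j:ℕ), hj⟩ := Sum.inl.inj hh
      have h6 := congrArg Fin.val h5
      exact hij h6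
    · rw [dif_pos hi, dif_neg hj]; exact Sum.inl_ne_inr
    · rw [dif_neg hi, dif_pos hj]; exact Sum.inr_ne_inl
    · rw [dif_neg hi, dif_neg hj]
      intro hh
      have h3 := congrArg Fin.val (Sum.inr.inj hh)
      simp only at h3
      rcases b <;> rcases b' <;> simp at h3 <;> omega
  set x0 : Fin k → V := fun i => Θx (σ false i) with hx0def
  set x1 : Fin k → V := fun i => Θx (σ true i) with hx1def
  -- Y-side data
  set Θy : Fin (t+p) ⊕ Fin (2*r) → V := Sum.elim η β with hΘydef
  have hΘy : ∀ u v, u ≠ v → Θy u ≠ Θy v := by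
    rintro (u | u) (v | v) huv hh
    · exact huv (congrArg Sum.inl (hηi hh))
    · have hh' : η u = β v := hh
      exact (hηm u).2 (by rw [hh']; exact (hβm v).1)
    · have hh' : β u = η v := hh
      exact (hηm v).2 (by rw [← hh']; exact (hβm u).1)
    · exact huv (congrArg Sum.inr (hβi hh))
  have hl2 : ∀ (i : Fin k) (b : Bool), ¬ (i:ℕ) < t + p →
      2*((i:ℕ)-t-p) + (if b then 1 else 0) < 2*r := by
    intro i b hi
    have := i.2
    rcases b <;> simp <;> omega
  set τ : Bool → Fin k → Fin (t+p) ⊕ Fin (2*r) := fun b i =>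
    if h : (i:ℕ) < t + p then Sum.inl ⟨i, h⟩
    else Sum.inr ⟨2*((i:ℕ)-t-p) + (if b then 1 else 0), hl2 i b h⟩ with hτdef
  have hτne : ∀ (b b' : Bool) (i j : Fin k), (i:ℕ) ≠ (j:ℕ) → τ b i ≠ τ b' j := by
    intro b b' i j hij
    rw [hτdef]; dsimp only
    by_cases hi : (i:ℕ) < t + p <;> by_cases hj : (j:ℕ) < t + p
    · rw [dif_pos hi, dif_pos hj]
      intro hh
      have h5 : (⟨(i:ℕ), hi⟩ : Fin (t+p)) = ⟨(j:ℕ), hj⟩ := Sum.inl.inj hh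
      have h6 := congrArg Fin.val h5
      exact hij h6
    · rw [dif_pos hi, dif_neg hj]; exact Sum.inl_ne_inr
    · rw [dif_neg hi, dif_pos hj]; exact Sum.inr_ne_inl
    · rw [dif_neg hi, dif_neg hj]
      intro hh
      have h3 := congrArg Fin.val (Sum.inr.inj hh)
      simp only at h3
      rcases b <;> rcases b' <;> simp at h3 <;> omega
  set y0 : Fin k → V := fun i => Θy (τ false i) with hy0def
  set y1 : Fin k → V := fun i => Θy (τ true i) with hy1def
  have hPΘx : ∀ u, P (Θx u) = true := by
    rintro (u | u)
    · exact (hξm u).1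
    · exact (hαm u).2
  have hPΘy : ∀ u, P (Θy u) = false := by
    rintro (u | u)
    · exact (hηm u).1
    · exact (hβm u).2
  have key := mixed_family hS hAne' hBne' x0 x1 y0 y1
    (fun i => hPΘx _) (fun i => hPΘx _) (fun i => hPΘy _) (fun i => hPΘy _) ?_ ?_ ?_ ?_
  · simpa using key
  · -- hX
    intro i j hij
    have hvij : (i : ℕ) ≠ (j : ℕ) := fun hh => hij (Fin.ext hh)
    exact ⟨hΘx _ _ (hσne _ _ _ _ hvij), hΘx _ _ (hσne _ _ _ _ hvij),
      hΘx _ _ (hσne _ _ _ _ hvij), hΘx _ _ (hσne _ _ _ _ hvij)⟩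
  · -- hY
    intro i j hij
    have hvij : (i : ℕ) ≠ (j : ℕ) := fun hh => hij (Fin.ext hh)
    exact ⟨hΘy _ _ (hτne _ _ _ _ hvij), hΘy _ _ (hτne _ _ _ _ hvij),
      hΘy _ _ (hτne _ _ _ _ hvij), hΘy _ _ (hτne _ _ _ _ hvij)⟩
  · -- htX
    intro i
    by_cases hi : (i:ℕ) < t
    · left
      constructor
      · rw [hx0def, hx1def]
        dsimp only
        rw [hσdef]
        dsimp only
        rw [dif_pos hi, dif_pos hi]
      · rw [hx0def]
        dsimp only
        rw [hσdef]
        dsimp only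
        rw [dif_pos hi]
        exact (hξm _).2
    · right
      have he0 : σ false i = Sum.inr ⟨2*((i:ℕ)-t), hl1 i false hi⟩ := by
        rw [hσdef]; dsimp only; rw [dif_neg hi]; rfl
      have he1 : σ true i = Sum.inr ⟨2*((i:ℕ)-t)+1, hl1 i true hi⟩ := by
        rw [hσdef]; dsimp only; rw [dif_neg hi]; rfl
      refine ⟨?_, ?_, ?_⟩
      · apply hΘx
        rw [he0, he1]
        intro hh
        have h3 := congrArg Fin.val (Sum.inr.inj hh)
        simp at h3
      · rw [hx0def]; dsimp only; rw [he0]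
        exact (hαm _).1
      · rw [hx1def]; dsimp only; rw [he1]
        exact (hαm _).1
  · -- htY
    intro i
    by_cases hi : (i:ℕ) < t + p
    · left
      constructor
      · rw [hy0def, hy1def]
        dsimp only
        rw [hτdef]
        dsimp only
        rw [dif_pos hi, dif_pos hi]
      · rw [hy0def]
        dsimp only
        rw [hτdef]
        dsimp only
        rw [dif_pos hi]
        exact (hηm _).2
    · right
      have he0 : τ false i = Sum.inr ⟨2*((i:ℕ)-t-p), hl2 i false hi⟩ := by
        rw [hτdef]; dsimp only; rw [dif_neg hi]; rfl
      have he1 : τ true i = Sum.inr ⟨2*((i:ℕ)-t-p)+1, hl2 i true hi⟩ := by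
        rw [hτdef]; dsimp only; rw [dif_neg hi]; rfl
      refine ⟨?_, ?_, ?_⟩
      · apply hΘy
        rw [he0, he1]
        intro hh
        have h3 := congrArg Fin.val (Sum.inr.inj hh)
        simp at h3
      · rw [hy0def]; dsimp only; rw [he0]
        exact (hβm _).1
      · rw [hy1def]; dsimp only; rw [he1]
        exact (hβm _).1


lemma star_counts {P : V → Bool} {S : Set V} (hS : 2 ≤ S.ncard)
    (hside : ∀ v ∈ S, P v = false) {k : ℕ}
    (hk : k ≤ (({v | P v = true} \ S : Set V)).ncard) :
    k ≤ (bipG P).cisstPacking S := by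
  obtain ⟨c, hci, hcm⟩ := exists_inj hk
  exact star_family hS hside c hci (fun i => (hcm i).1) (fun i => (hcm i).2)

lemma doubleStar_counts {P : V → Bool} {S : Set V} (hS : 2 ≤ S.ncard)
    (hA : 2 ≤ ((S ∩ {v | P v = true} : Set V)).ncard)
    (hB : 1 ≤ ((S ∩ {v | P v = false} : Set V)).ncard) {k : ℕ}
    (hk1 : k ≤ (({v | P v = true} : Set V)).ncard)
    (hk2 : k ≤ (({v | P v = false} \ S : Set V)).ncard) :
    k ≤ (bipG P).cisstPacking S := by
  obtain ⟨x, hxi, hxm⟩ := exists_inj hk1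
  obtain ⟨y, hyi, hym⟩ := exists_inj hk2
  have hA' : ∃ u₁ ∈ S, ∃ u₂ ∈ S, P u₁ = true ∧ P u₂ = true ∧ u₁ ≠ u₂ := by
    obtain ⟨u₁, hu₁, u₂, hu₂, h12⟩ :=
      (Set.one_lt_ncard ((S ∩ {v | P v = true} : Set V)).toFinite).1 hA
    exact ⟨u₁, hu₁.1, u₂, hu₂.1, hu₁.2, hu₂.2, h12⟩
  have hB' : ∃ z ∈ S, P z = false := by
    obtain ⟨z, hz⟩ := Set.nonempty_of_ncard_ne_zero
      (s := (S ∩ {v | P v = false} : Set V)) (by omega)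
    exact ⟨z, hz.1, hz.2⟩
  exact doubleStar_family hS hA' hB' x y hxi (fun i => hxm i) hyi
    (fun i => (hym i).1) (fun i => (hym i).2)

lemma arith_decision (m1 m2 s a b n1 n2 : ℕ) (h2 : m1 ≤ m2) (h3 : m2 - m1 + 3 ≤ s)
    (h5 : a + n1 = m1) (h6 : b + n2 = m2) (h7 : a + b = s)
    (ha : 1 ≤ a) (hb : 1 ≤ b) :
    (2 ≤ a ∧ 2*m1+m2 ≤ 3 * min m1 n2 + s + 2) ∨
    (2 ≤ b ∧ 2*m1+m2 ≤ 3 * min m2 n1 + s + 2) ∨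
    (2*m1+m2 ≤ 3*(min n1 n2 + min (n2 - min n1 n2) (a/2) +
      min (a/2 - min (n2 - min n1 n2) (a/2)) (b/2)) + s + 2) ∨
    (2*m1+m2 ≤ 3*(min n1 n2 + min (n1 - min n1 n2) (b/2) +
      min (b/2 - min (n1 - min n1 n2) (b/2)) (a/2)) + s + 2) := by
  omega

end StProof

theorem stmt_12 (m₁ m₂ s : ℕ) (h1 : 2 ≤ m₁) (h12 : m₁ ≤ m₂)
    (hs : m₂ - m₁ + 3 ≤ s) (hs' : s ≤ m₁ + m₂) :
    (m₁ : ℝ) - ((m₁ : ℝ) + (s : ℝ) - (m₂ : ℝ) + 2) / 3 ≤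
      ((completeBipartiteGraph (Fin m₁) (Fin m₂)).genConnStar s : ℝ) := by
  classical
  set P : Fin m₁ ⊕ Fin m₂ → Bool := Sum.isLeft with hPdef
  have hG : completeBipartiteGraph (Fin m₁) (Fin m₂) = StProof.bipG P := by
    ext u v
    cases u <;> cases v <;> simp [StProof.bipG, hPdef]
  have hcard : Fintype.card (Fin m₁ ⊕ Fin m₂) = m₁ + m₂ := by simp
  obtain ⟨S, hScard, hEq⟩ := StProof.genConnStar_attained
    (G := StProof.bipG P) (s := s) (by omega)
  rw [hG, hEq]
  have hXm : ({v : Fin m₁ ⊕ Fin m₂ | P v = true}).ncard = m₁ := by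
    have hr : {v : Fin m₁ ⊕ Fin m₂ | P v = true} = Set.range Sum.inl := by
      ext v; cases v <;> simp [hPdef]
    rw [hr, ← Set.image_univ, Set.ncard_image_of_injective _ Sum.inl_injective,
      Set.ncard_univ, Nat.card_eq_fintype_card, Fintype.card_fin]
  have hYm : ({v : Fin m₁ ⊕ Fin m₂ | P v = false}).ncard = m₂ := by
    have hr : {v : Fin m₁ ⊕ Fin m₂ | P v = false} = Set.range Sum.inr := by
      ext v; cases v <;> simp [hPdef]
    rw [hr, ← Set.image_univ, Set.ncard_image_of_injective _ Sum.inr_injective,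
      Set.ncard_univ, Nat.card_eq_fintype_card, Fintype.card_fin]
  set a := ((S ∩ {v | P v = true} : Set (Fin m₁ ⊕ Fin m₂))).ncard with hadef
  set b := ((S ∩ {v | P v = false} : Set (Fin m₁ ⊕ Fin m₂))).ncard with hbdef
  set n1 := (({v | P v = true} \ S : Set (Fin m₁ ⊕ Fin m₂))).ncard with hn1def
  set n2 := (({v | P v = false} \ S : Set (Fin m₁ ⊕ Fin m₂))).ncard with hn2def
  have hab : a + b = s := by
    have h0 := Set.ncard_inter_add_ncard_diff_eq_ncard S
      {v : Fin m₁ ⊕ Fin m₂ | P v = true} (S.toFinite)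
    have hd : (S \ {v : Fin m₁ ⊕ Fin m₂ | P v = true}) = S ∩ {v | P v = false} := by
      ext v; simp
    rw [hd, hScard] at h0
    rw [hadef, hbdef, h0]
  have han : a + n1 = m₁ := by
    have h0 := Set.ncard_inter_add_ncard_diff_eq_ncard
      {v : Fin m₁ ⊕ Fin m₂ | P v = true} S (Set.toFinite _)
    rw [Set.inter_comm, hXm] at h0
    rw [hadef, hn1def, h0]
  have hbn : b + n2 = m₂ := by
    have h0 := Set.ncard_inter_add_ncard_diff_eq_ncard
      {v : Fin m₁ ⊕ Fin m₂ | P v = false} S (Set.toFinite _)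
    rw [Set.inter_comm, hYm] at h0
    rw [hbdef, hn2def, h0]
  have hS2 : 2 ≤ S.ncard := by rw [hScard]; omega
  have hsw1 : {v : Fin m₁ ⊕ Fin m₂ | (!P v) = true} = {v | P v = false} := by
    ext v; simp
  have hsw2 : {v : Fin m₁ ⊕ Fin m₂ | (!P v) = false} = {v | P v = true} := by
    ext v; simp
  have hswG : StProof.bipG (fun v : Fin m₁ ⊕ Fin m₂ => !P v) = StProof.bipG P :=
    StProof.bipG_not P
  have main : ∃ K : ℕ, K ≤ (StProof.bipG P).cisstPacking S ∧ 2*m₁+m₂ ≤ 3*K + s + 2 := by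
    by_cases ha0 : a = 0
    · -- all terminals on the right side: stars
      have hempty : (S ∩ {v : Fin m₁ ⊕ Fin m₂ | P v = true}) = ∅ :=
        (Set.ncard_eq_zero (Set.toFinite _)).1 ha0
      have hside : ∀ v ∈ S, P v = false := by
        intro v hv
        by_contra hPv
        simp only [Bool.not_eq_false] at hPv
        have hmem : v ∈ (S ∩ {v : Fin m₁ ⊕ Fin m₂ | P v = true}) := ⟨hv, hPv⟩
        rw [hempty] at hmem
        exact hmem
      have hXdiff : ({v : Fin m₁ ⊕ Fin m₂ | P v = true} \ S) =
          {v : Fin m₁ ⊕ Fin m₂ | P v = true} := by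
        ext v
        constructor
        · exact fun h => h.1
        · intro h
          refine ⟨h, fun hvS => ?_⟩
          have hmem : v ∈ (S ∩ {v : Fin m₁ ⊕ Fin m₂ | P v = true}) := ⟨hvS, h⟩
          rw [hempty] at hmem
          exact hmem
      refine ⟨m₁, StProof.star_counts hS2 hside ?_, by omega⟩
      rw [hXdiff, hXm]
    · by_cases hb0 : b = 0
      · -- all terminals on the left side: stars in the swapped orientation
        have hempty : (S ∩ {v : Fin m₁ ⊕ Fin m₂ | P v = false}) = ∅ :=
          (Set.ncard_eq_zero (Set.toFinite _)).1 hb0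
        have hside : ∀ v ∈ S, (!P v) = false := by
          intro v hv
          by_contra hPv
          simp only [Bool.not_eq_false, Bool.not_eq_true'] at hPv
          have hmem : v ∈ (S ∩ {v : Fin m₁ ⊕ Fin m₂ | P v = false}) := ⟨hv, hPv⟩
          rw [hempty] at hmem
          exact hmem
        have hYdiff : ({v : Fin m₁ ⊕ Fin m₂ | P v = false} \ S) =
            {v : Fin m₁ ⊕ Fin m₂ | P v = false} := by
          ext v
          constructor
          · exact fun h => h.1
          · intro h
            refine ⟨h, fun hvS => ?_⟩
            have hmem : v ∈ (S ∩ {v : Fin m₁ ⊕ Fin m₂ | P v = false}) := ⟨hvS, h⟩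
            rw [hempty] at hmem
            exact hmem
        refine ⟨m₂, ?_, by omega⟩
        have hres := StProof.star_counts (P := fun v => !P v) hS2 hside
          (k := m₂) (by rw [hsw1, hYdiff, hYm])
        rwa [hswG] at hres
      · have ha1 : 1 ≤ a := by omega
        have hb1 : 1 ≤ b := by omega
        rcases StProof.arith_decision m₁ m₂ s a b n1 n2 h12 hs han hbn hab ha1 hb1 with
          ⟨ha2, hineq⟩ | ⟨hb2, hineq⟩ | hineq | hineq
        · refine ⟨min m₁ n2, StProof.doubleStar_counts hS2 ha2 hb1 ?_ ?_, hineq⟩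
          · rw [hXm]; exact min_le_left _ _
          · exact min_le_right _ _
        · refine ⟨min m₂ n1, ?_, hineq⟩
          have hres := StProof.doubleStar_counts (P := fun v => !P v) hS2
            (by rw [hsw1]; exact hb2) (by rw [hsw2]; exact ha1) (k := min m₂ n1)
            (by rw [hsw1, hYm]; exact min_le_left _ _)
            (by rw [hsw2]; exact min_le_right _ _)
          rwa [hswG] at hres
        · refine ⟨min n1 n2 + min (n2 - min n1 n2) (a/2) +
            min (a/2 - min (n2 - min n1 n2) (a/2)) (b/2),
            StProof.mixed_counts hS2 ?_ ?_ ?_ ?_ (by omega) (by omega), hineq⟩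
          · exact min_le_left _ _
          · omega
          · omega
          · omega
        · refine ⟨min n1 n2 + min (n1 - min n1 n2) (b/2) +
            min (b/2 - min (n1 - min n1 n2) (b/2)) (a/2), ?_, hineq⟩
          have hres := StProof.mixed_counts (P := fun v => !P v) hS2
            (t := min n1 n2) (p := min (n1 - min n1 n2) (b/2))
            (r := min (b/2 - min (n1 - min n1 n2) (b/2)) (a/2))
            (by rw [hsw1]; exact min_le_right _ _)
            (by rw [hsw2]; omega)
            (by rw [hsw1]; omega)
            (by rw [hsw2]; omega)
            (by rw [hsw1]; omega)
            (by rw [hsw2]; omega)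
          rwa [hswG] at hres
  obtain ⟨K, hK1, hK2⟩ := main
  have hK3 : (2*m₁+m₂ : ℕ) ≤ 3 * ((StProof.bipG P).cisstPacking S) + s + 2 := by omega
  have hcast : 2*(m₁:ℝ)+(m₂:ℝ) ≤ 3*(((StProof.bipG P).cisstPacking S : ℕ) : ℝ) +
      (s:ℝ) + 2 := by
    exact_mod_cast hK3
  linarith
end

section
/- Let K_{m₁,m₂} have bipartition X = {x₁,…,x_{m₁}}, Y = {y₁,…,y_{m₂}} and let S_i = {x₁,…,x_i, y₁,…,y_{s−i}} with 1 ≤ i ≤ s−1 and min{m₁−i, m₂−(s−i)} ≥ 1. For 1 ≤ j ≤ min{m₁−i, m₂−(s−i)}, define the tree T_j with vertex set S_i ∪ {x_{i+j}, y_{s−i+j}} and edge set {y_{s−i+j}x_t : 1 ≤ t ≤ i} ∪ {x_{i+j}y_t : 1 ≤ t ≤ s−i} ∪ {x_{i+j}y_{s−i+j}}. Then the trees T_j are pairwise completely independent S_i-Steiner trees in K_{m₁,m₂}. -/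
open SimpleGraph

/-!
Each `T_j` is a double star: its centres `x_{i+j}` and `y_{s-i+j}` are adjacent and lie outside
`S_i`, and every vertex of `S_i` is a leaf attached to one of them. Such a graph is a tree whose
leaves are exactly the terminals. Distinct `j` have distinct centres, so the vertex sets meet
exactly in `S_i`. An edge shared by two trees would join two common vertices, i.e. two terminals,
but terminals are only adjacent to centres. An inner vertex of a path inside a tree has two
neighbours there, hence is a centre, and no centre is shared, so paths in distinct trees are
internally disjoint.
-/

namespace SimpleGraph

variable {V : Type*} {G : SimpleGraph V}

lemma Walk.IsCycle.nontrivial_neighborSet {u v : V} {c : G.Walk u u} (hc : c.IsCycle)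
    (hv : v ∈ c.support) : (G.neighborSet v).Nontrivial := by
  classical
  have hc' := hc.rotate hv
  exact ⟨_, Walk.adj_snd hc'.not_nil, _, (Walk.adj_penultimate hc'.not_nil).symm,
    hc'.snd_ne_penultimate⟩

lemma Walk.IsPath.nontrivial_neighborSet_toSubgraph {u v w : V} {p : G.Walk u w}
    (hp : p.IsPath) (hv : v ∈ p.support) (hu : v ≠ u) (hw : v ≠ w) :
    (p.toSubgraph.neighborSet v).Nontrivial := by
  classical
  obtain ⟨n, rfl, hn⟩ := Walk.mem_support_iff_exists_getVert.mp hv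
  have h0 : n ≠ 0 := by rintro rfl; simp at hu
  have hlt : n < p.length := lt_of_le_of_ne hn (by rintro rfl; simp at hw)
  obtain ⟨x, y, hxy, hs⟩ :=
    Set.ncard_eq_two.mp (hp.ncard_neighborSet_toSubgraph_internal_eq_two h0 hlt)
  exact hs ▸ Set.nontrivial_pair hxy

lemma Subgraph.walkIn.neighborSet_toSubgraph_subset {T : G.Subgraph} {u w : V} {p : G.Walk u w}
    (hp : T.walkIn p) (v : V) : p.toSubgraph.neighborSet v ⊆ T.neighborSet v := fun _ hx ↦
  hp _ (Walk.adj_toSubgraph_iff_mem_edges.mp hx)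

lemma isAcyclic_of_subsingleton_neighborSet {W : Type*} {H : SimpleGraph W} (a b : W)
    (h : ∀ v, v ≠ a → v ≠ b → (H.neighborSet v).Subsingleton) : H.IsAcyclic := by
  intro u c hc
  have hab : ∀ v ∈ c.support, v = a ∨ v = b := fun v hv ↦ by
    by_contra! hne
    exact (hc.nontrivial_neighborSet hv).not_subsingleton (h v hne.1 hne.2)
  have hu := hab u c.start_mem_support
  have hsnd := hab c.snd (c.getVert_mem_support 1)
  have hpen := hab c.penultimate (c.getVert_mem_support _)
  have h1 := (c.adj_snd hc.not_nil).ne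
  have h2 := (c.adj_penultimate hc.not_nil).ne
  have h3 := hc.snd_ne_penultimate
  grind

lemma Subgraph.adj_of_neighborSet_eq_singleton {T : G.Subgraph} {v c : V}
    (h : T.neighborSet v = {c}) : T.Adj v c := by
  rw [← Subgraph.mem_neighborSet, h]
  exact Set.mem_singleton c

variable {S : Set V}

theorem isSteinerTree_of_verts_eq_union_pair {T : G.Subgraph} {a b : V}
    (hverts : T.verts = S ∪ {a, b}) (hab : T.Adj a b) (ha : a ∉ S) (hb : b ∉ S)
    (ha' : ∃ y ∈ S, T.Adj a y) (hb' : ∃ x ∈ S, T.Adj b x)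
    (hS : ∀ v ∈ S, ∃ c ∉ S, T.neighborSet v = {c}) : G.IsSteinerTree S T := by
  have hpair : ∀ v ∈ T.verts, v ∉ S → v = a ∨ v = b := by
    intro v hv hvS
    simpa [hverts, hvS] using hv
  refine ⟨⟨?_, ?_⟩, hverts ▸ Set.subset_union_left, ?_⟩
  · refine (connected_iff_exists_forall_reachable _).2 ⟨⟨a, hab.fst_mem⟩, ?_⟩
    have hb_reach : T.coe.Reachable ⟨a, hab.fst_mem⟩ ⟨b, hab.snd_mem⟩ := hab.coe.reachable
    rintro ⟨v, hv⟩
    by_cases hvS : v ∈ S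
    · obtain ⟨c, hcS, hc⟩ := hS v hvS
      have hvc := Subgraph.adj_of_neighborSet_eq_singleton hc
      rcases hpair c hvc.snd_mem hcS with rfl | rfl
      · exact hvc.coe.reachable.symm
      · exact hb_reach.trans hvc.coe.reachable.symm
    · rcases hpair v hv hvS with rfl | rfl
      · rfl
      · exact hb_reach
  · refine isAcyclic_of_subsingleton_neighborSet ⟨a, hab.fst_mem⟩ ⟨b, hab.snd_mem⟩ ?_
    rintro ⟨v, hv⟩ hva hvb x hx y hy
    have hvS : v ∈ S := by
      by_contra hvS
      rcases hpair v hv hvS with rfl | rfl <;> simp_all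
    obtain ⟨c, -, hc⟩ := hS v hvS
    have hx' : x.1 ∈ T.neighborSet v := hx
    have hy' : y.1 ∈ T.neighborSet v := hy
    rw [hc] at hx' hy'
    exact Subtype.ext (hx'.trans hy'.symm)
  · intro v hv hleaf
    by_contra hvS
    rcases hpair v hv hvS with rfl | rfl
    · obtain ⟨y, hyS, hy⟩ := ha'
      exact hleaf ⟨b, y, fun h ↦ hb (h ▸ hyS), hab, hy⟩
    · obtain ⟨x, hxS, hx⟩ := hb'
      exact hleaf ⟨a, x, fun h ↦ ha (h ▸ hxS), hab.symm, hx⟩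

theorem completelyIndependent_of_neighborSet_eq_singleton {ι : Type*} {Ts : ι → G.Subgraph}
    (hverts : Pairwise fun p q ↦ (Ts p).verts ∩ (Ts q).verts = S)
    (hS : ∀ p, ∀ v ∈ S, ∃ c ∉ S, (Ts p).neighborSet v = {c}) :
    G.CompletelyIndependent S Ts := by
  intro p q hpq
  have hpq' := hverts hpq
  refine ⟨Set.eq_empty_iff_forall_notMem.2 fun e ⟨hep, heq⟩ ↦ ?_, hpq', ?_⟩
  · induction e using Sym2.ind with | _ u w => ?_
    rw [Subgraph.mem_edgeSet] at hep heq
    have hu : u ∈ S := hpq' ▸ ⟨hep.fst_mem, heq.fst_mem⟩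
    have hw : w ∈ S := hpq' ▸ ⟨hep.snd_mem, heq.snd_mem⟩
    obtain ⟨c, hcS, hc⟩ := hS p u hu
    have hwc : w ∈ (Ts p).neighborSet u := hep
    rw [hc, Set.mem_singleton_iff] at hwc
    exact hcS (hwc ▸ hw)
  · intro x₁ _ x₂ _ _ P Q hP hQ hPp hQq v hvP hvQ
    by_contra! hv
    have hp := (hP.nontrivial_neighborSet_toSubgraph hvP hv.1 hv.2).mono
      (hPp.neighborSet_toSubgraph_subset v)
    have hq := (hQ.nontrivial_neighborSet_toSubgraph hvQ hv.1 hv.2).mono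
      (hQq.neighborSet_toSubgraph_subset v)
    have hvS : v ∈ S :=
      hpq' ▸ ⟨(Ts p).edge_vert hp.nonempty.some_mem, (Ts q).edge_vert hq.nonempty.some_mem⟩
    obtain ⟨c, -, hc⟩ := hS p v hvS
    exact hp.not_subsingleton (hc ▸ Set.subsingleton_singleton)

end SimpleGraph

section CompleteBipartite

variable {m₁ m₂ i r : ℕ}

/-- The paper's `S_i` with `r = s - i`, vertices indexed from `0`: `x_{t+1}` is `Sum.inl t` and
`y_{t+1}` is `Sum.inr t`. -/
def bipartiteTerminals (m₁ m₂ i r : ℕ) : Set (Fin m₁ ⊕ Fin m₂) :=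
  {v | (∃ t : Fin m₁, v = Sum.inl t ∧ (t : ℕ) < i) ∨ (∃ t : Fin m₂, v = Sum.inr t ∧ (t : ℕ) < r)}

/-- The edge set of the paper's `T_j`, with centres `x_{i+j} = Sum.inl a` and
`y_{s-i+j} = Sum.inr b`. -/
def doubleStarEdges (i r : ℕ) (a : Fin m₁) (b : Fin m₂) : Set (Sym2 (Fin m₁ ⊕ Fin m₂)) :=
  {e | ∃ t : Fin m₁, (t : ℕ) < i ∧ e = s(Sum.inr b, Sum.inl t)} ∪
    {e | ∃ t : Fin m₂, (t : ℕ) < r ∧ e = s(Sum.inl a, Sum.inr t)} ∪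
    {s(Sum.inl a, Sum.inr b)}

lemma inl_notMem_bipartiteTerminals {a : Fin m₁} (ha : i ≤ a) :
    Sum.inl a ∉ bipartiteTerminals m₁ m₂ i r := by
  simpa [bipartiteTerminals] using ha

lemma inr_notMem_bipartiteTerminals {b : Fin m₂} (hb : r ≤ b) :
    Sum.inr b ∉ bipartiteTerminals m₁ m₂ i r := by
  simpa [bipartiteTerminals] using hb

lemma bipartiteTerminals_union_inter_union {a a' : Fin m₁} {b b' : Fin m₂} (ha : a ≠ a')
    (hb : b ≠ b') :
    (bipartiteTerminals m₁ m₂ i r ∪ {Sum.inl a, Sum.inr b}) ∩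
      (bipartiteTerminals m₁ m₂ i r ∪ {Sum.inl a', Sum.inr b'}) = bipartiteTerminals m₁ m₂ i r := by
  rw [← Set.union_inter_distrib_left, Set.union_eq_left]
  rintro v ⟨rfl | rfl, h⟩ <;> simp_all

variable {T : (completeBipartiteGraph (Fin m₁) (Fin m₂)).Subgraph} {a : Fin m₁} {b : Fin m₂}

lemma neighborSet_inl_of_edgeSet_eq (hT : T.edgeSet = doubleStarEdges i r a b) (ha : i ≤ a)
    {t : Fin m₁} (ht : t < i) : T.neighborSet (Sum.inl t) = {Sum.inr b} := by
  have hta : t ≠ a := by rintro rfl; omega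
  ext w
  rw [Subgraph.mem_neighborSet, ← Subgraph.mem_edgeSet, hT]
  simp [doubleStarEdges, hta, ht]

lemma neighborSet_inr_of_edgeSet_eq (hT : T.edgeSet = doubleStarEdges i r a b) (hb : r ≤ b)
    {t : Fin m₂} (ht : t < r) : T.neighborSet (Sum.inr t) = {Sum.inl a} := by
  have htb : t ≠ b := by rintro rfl; omega
  ext w
  rw [Subgraph.mem_neighborSet, ← Subgraph.mem_edgeSet, hT]
  simp [doubleStarEdges, htb, ht]

lemma adj_of_edgeSet_eq (hT : T.edgeSet = doubleStarEdges i r a b) :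
    T.Adj (Sum.inl a) (Sum.inr b) := by
  rw [← Subgraph.mem_edgeSet, hT]
  simp [doubleStarEdges]

lemma exists_neighborSet_eq_singleton_of_edgeSet_eq (hT : T.edgeSet = doubleStarEdges i r a b)
    (ha : i ≤ a) (hb : r ≤ b) :
    ∀ v ∈ bipartiteTerminals m₁ m₂ i r,
      ∃ c ∉ bipartiteTerminals m₁ m₂ i r, T.neighborSet v = {c} := by
  rintro _ (⟨t, rfl, ht⟩ | ⟨t, rfl, ht⟩)
  · exact ⟨_, inr_notMem_bipartiteTerminals hb, neighborSet_inl_of_edgeSet_eq hT ha ht⟩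
  · exact ⟨_, inl_notMem_bipartiteTerminals ha, neighborSet_inr_of_edgeSet_eq hT hb ht⟩

theorem isSteinerTree_of_edgeSet_eq
    (hV : T.verts = bipartiteTerminals m₁ m₂ i r ∪ {Sum.inl a, Sum.inr b})
    (hT : T.edgeSet = doubleStarEdges i r a b) (hi : 0 < i) (hr : 0 < r) (ha : i ≤ a)
    (hb : r ≤ b) : (completeBipartiteGraph (Fin m₁) (Fin m₂)).IsSteinerTree
      (bipartiteTerminals m₁ m₂ i r) T := by
  have hx₀ : Sum.inl ⟨0, by omega⟩ ∈ bipartiteTerminals m₁ m₂ i r := .inl ⟨_, rfl, hi⟩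
  have hy₀ : Sum.inr ⟨0, by omega⟩ ∈ bipartiteTerminals m₁ m₂ i r := .inr ⟨_, rfl, hr⟩
  refine isSteinerTree_of_verts_eq_union_pair hV (adj_of_edgeSet_eq hT)
    (inl_notMem_bipartiteTerminals ha) (inr_notMem_bipartiteTerminals hb) ⟨_, hy₀, ?_⟩
    ⟨_, hx₀, ?_⟩ (exists_neighborSet_eq_singleton_of_edgeSet_eq hT ha hb)
  · exact (Subgraph.adj_of_neighborSet_eq_singleton
      (neighborSet_inr_of_edgeSet_eq hT hb (t := ⟨0, _⟩) hr)).symm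
  · exact (Subgraph.adj_of_neighborSet_eq_singleton
      (neighborSet_inl_of_edgeSet_eq hT ha (t := ⟨0, _⟩) hi)).symm

end CompleteBipartite

theorem stmt_18 (m₁ m₂ s i : ℕ) (hi1 : 1 ≤ i) (hi2 : i ≤ s - 1)
    (Si : Set (Fin m₁ ⊕ Fin m₂))
    (hSi : Si = {v | (∃ t : Fin m₁, v = Sum.inl t ∧ (t : ℕ) < i) ∨
                     (∃ t : Fin m₂, v = Sum.inr t ∧ (t : ℕ) < s - i)})
    (Ts : Fin (min (m₁ - i) (m₂ - (s - i))) →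
      (completeBipartiteGraph (Fin m₁) (Fin m₂)).Subgraph)
    (hverts : ∀ j, (Ts j).verts =
      Si ∪ {Sum.inl (⟨i + j, by have := j.isLt; omega⟩ : Fin m₁),
            Sum.inr (⟨s - i + j, by have := j.isLt; omega⟩ : Fin m₂)})
    (hedges : ∀ j, (Ts j).edgeSet =
      {e | ∃ t : Fin m₁, (t : ℕ) < i ∧
        e = s(Sum.inr (⟨s - i + j, by have := j.isLt; omega⟩ : Fin m₂), Sum.inl t)} ∪
      {e | ∃ t : Fin m₂, (t : ℕ) < s - i ∧
        e = s(Sum.inl (⟨i + j, by have := j.isLt; omega⟩ : Fin m₁), Sum.inr t)} ∪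
      {s(Sum.inl (⟨i + j, by have := j.isLt; omega⟩ : Fin m₁),
         Sum.inr (⟨s - i + j, by have := j.isLt; omega⟩ : Fin m₂))}) :
    (∀ j, (completeBipartiteGraph (Fin m₁) (Fin m₂)).IsSteinerTree Si (Ts j)) ∧
    (completeBipartiteGraph (Fin m₁) (Fin m₂)).CompletelyIndependent Si Ts := by
  subst hSi
  have hr : 0 < s - i := by omega
  refine ⟨fun j ↦ isSteinerTree_of_edgeSet_eq (hverts j) (hedges j) hi1 hr (by simp) (by simp),
    completelyIndependent_of_neighborSet_eq_singleton (fun p q hpq ↦ ?_)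
      fun j ↦ exists_neighborSet_eq_singleton_of_edgeSet_eq (hedges j) (by simp) (by simp)⟩
  dsimp only
  rw [hverts p, hverts q]
  exact bipartiteTerminals_union_inter_union (by simpa [Fin.ext_iff] using hpq)
    (by simpa [Fin.ext_iff] using hpq)
end

section
/- There do not exist 5 pairwise completely independent S-Steiner trees in the complete bipartite graph K_{5,6} with bipartition X = {x₁,…,x₅}, Y = {y₁,…,y₆}, where S = {x₁, x₂, y₁, y₂}. -/
/-!
In `K_{5,6}` the terminals `y₁, y₂` have degree 5, and each of the 5 edge-disjoint trees uses an
edge at them, so `y₁, y₂` are leaves of every tree. In each tree the path from `x₁` to `x₂` passes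
through a vertex of `Y` with two tree neighbours, hence outside `S`. Since the trees meet only in
`S`, this gives 5 distinct vertices in `Y \ S`, which has only 4.
-/

open SimpleGraph

namespace SimpleGraph

variable {V ι : Type*} {G : SimpleGraph V}

theorem Reachable.exists_adj_adj_ne {a b : V} (h : G.Reachable a b) (hab : a ≠ b)
    (hnadj : ¬ G.Adj a b) : ∃ v c, G.Adj a v ∧ G.Adj v c ∧ c ≠ a := by
  classical
  obtain ⟨p⟩ := h
  have hp := p.bypass_isPath
  cases hq : p.bypass with
  | nil => exact absurd rfl hab
  | cons h₁ q =>
    cases q with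
    | nil => exact absurd h₁ hnadj
    | cons h₂ r =>
      rw [hq, Walk.cons_isPath_iff] at hp
      exact ⟨_, _, h₁, h₂, fun hc => hp.2 (by simp [← hc])⟩

namespace Subgraph

theorem Preconnected.exists_adj_adj_ne {T : G.Subgraph} (hT : T.Preconnected) {a b : V}
    (ha : a ∈ T.verts) (hb : b ∈ T.verts) (hab : a ≠ b) (hnadj : ¬ T.Adj a b) :
    ∃ v c, T.Adj a v ∧ T.Adj v c ∧ c ≠ a := by
  obtain ⟨v, c, hv, hc, hca⟩ := (hT ⟨a, ha⟩ ⟨b, hb⟩).exists_adj_adj_ne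
    (fun h => hab (congrArg Subtype.val h)) hnadj
  exact ⟨v, c, hv, hc, fun h => hca (Subtype.ext h)⟩

variable {Ts : ι → G.Subgraph}

theorem injective_of_adj_of_pairwise_disjoint
    (hd : Pairwise fun i j => Disjoint (Ts i).edgeSet (Ts j).edgeSet) {y : V} {g : ι → V}
    (hg : ∀ i, (Ts i).Adj y (g i)) : Function.Injective g := by
  intro i j hij
  by_contra hne
  exact Set.disjoint_left.mp (hd hne) (Subgraph.mem_edgeSet.mpr (hg i))
    (Subgraph.mem_edgeSet.mpr (hij ▸ hg j))

theorem eq_of_adj_of_pairwise_disjoint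
    (hd : Pairwise fun i j => Disjoint (Ts i).edgeSet (Ts j).edgeSet) {y : V}
    [Finite (G.neighborSet y)] (hcard : Nat.card (G.neighborSet y) ≤ Nat.card ι)
    (hex : ∀ i, ∃ v, (Ts i).Adj y v) {i : ι} {a b : V} (ha : (Ts i).Adj y a)
    (hb : (Ts i).Adj y b) : a = b := by
  choose g hg using hex
  have hsurj : Function.Surjective fun j => (⟨g j, (hg j).adj_sub⟩ : G.neighborSet y) :=
    (Function.Injective.bijective_of_nat_card_le
      (fun j k h => injective_of_adj_of_pairwise_disjoint hd hg (congrArg Subtype.val h))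
      hcard).2
  have hunique : ∀ c, (Ts i).Adj y c → c = g i := by
    intro c hc
    obtain ⟨j, hj⟩ := hsurj ⟨c, hc.adj_sub⟩
    obtain rfl : j = i := by
      by_contra hne
      have hcj : g j = c := congrArg Subtype.val hj
      exact Set.disjoint_left.mp (hd hne) (Subgraph.mem_edgeSet.mpr (hg j))
        (Subgraph.mem_edgeSet.mpr (hcj ▸ hc))
    exact (congrArg Subtype.val hj).symm
  rw [hunique a ha, hunique b hb]

end Subgraph

variable {S : Set V} {Ts : ι → G.Subgraph}

theorem InternallyDisjoint.pairwise_disjoint_edgeSet (h : G.InternallyDisjoint S Ts) :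
    Pairwise fun i j => Disjoint (Ts i).edgeSet (Ts j).edgeSet :=
  fun _ _ hij => Set.disjoint_iff_inter_eq_empty.mpr (h _ _ hij).1

theorem InternallyDisjoint.injective_of_mem_verts_diff (h : G.InternallyDisjoint S Ts)
    {f : ι → V} (hf : ∀ i, f i ∈ (Ts i).verts \ S) : Function.Injective f := by
  intro i j hij
  by_contra hne
  exact (hf i).2 ((h i j hne).2 ▸ ⟨(hf i).1, hij ▸ (hf j).1⟩)

theorem CompletelyIndependent.internallyDisjoint (h : G.CompletelyIndependent S Ts) :
    G.InternallyDisjoint S Ts :=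
  fun _ _ hij => ⟨(h _ _ hij).1, (h _ _ hij).2.1⟩

theorem completeBipartiteGraph_neighborSet_inr {α β : Type*} (y : β) :
    (completeBipartiteGraph α β).neighborSet (Sum.inr y) = Set.range Sum.inl := by
  ext (x | x) <;> simp

open Sum

theorem not_internallyDisjoint_completeBipartiteGraph {α β ι : Type*} [Finite α] [Finite β]
    {S : Set (α ⊕ β)} {x₁ x₂ : α} (hx : x₁ ≠ x₂) (hx₁ : inl x₁ ∈ S) (hx₂ : inl x₂ ∈ S)
    (hα : Nat.card α ≤ Nat.card ι) (hβ : Nat.card {y : β // inr y ∉ S} < Nat.card ι)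
    (Ts : ι → (completeBipartiteGraph α β).Subgraph)
    (hT : ∀ i, (completeBipartiteGraph α β).IsSteinerTree S (Ts i)) :
    ¬ (completeBipartiteGraph α β).InternallyDisjoint S Ts := by
  intro hID
  have hconn (i : ι) : (Ts i).Preconnected := ⟨(hT i).1.connected.preconnected⟩
  have hleaf (i : ι) (y : β) (hy : inr y ∈ S) {a b : α ⊕ β} (ha : (Ts i).Adj (inr y) a)
      (hb : (Ts i).Adj (inr y) b) : a = b := by
    refine Subgraph.eq_of_adj_of_pairwise_disjoint hID.pairwise_disjoint_edgeSet ?_ ?_ ha hb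
    · rw [completeBipartiteGraph_neighborSet_inr, Nat.card_range_of_injective inl_injective]
      exact hα
    · intro j
      have : Nontrivial (Ts j).verts := ⟨⟨⟨_, (hT j).2.1 hy⟩, ⟨_, (hT j).2.1 hx₁⟩, by simp⟩⟩
      exact (hconn j).exists_adj_of_nontrivial ⟨_, (hT j).2.1 hy⟩
  have hinner (i : ι) : ∃ k : β, inr k ∈ (Ts i).verts \ S := by
    obtain ⟨v, c, hv, hc, hca⟩ := (hconn i).exists_adj_adj_ne ((hT i).2.1 hx₁) ((hT i).2.1 hx₂)
      (by simpa using hx) (fun h => by simpa using h.adj_sub)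
    obtain ⟨k, rfl⟩ : ∃ k, v = inr k := by
      cases v with
      | inl _ => simpa using hv.adj_sub
      | inr k => exact ⟨k, rfl⟩
    exact ⟨k, hv.snd_mem, fun hk => hca (hleaf i k hk hc hv.symm)⟩
  choose k hk using hinner
  have hinj : Function.Injective fun i => (⟨k i, (hk i).2⟩ : {y : β // inr y ∉ S}) :=
    fun i j h => hID.injective_of_mem_verts_diff hk (congrArg (inr ∘ Subtype.val) h)
  exact (Nat.card_le_card_of_injective _ hinj).not_gt hβ

end SimpleGraph

theorem stmt_19 :
    ¬ ∃ Ts : Fin 5 → (completeBipartiteGraph (Fin 5) (Fin 6)).Subgraph,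
      (∀ i, (completeBipartiteGraph (Fin 5) (Fin 6)).IsSteinerTree
        ({Sum.inl 0, Sum.inl 1, Sum.inr 0, Sum.inr 1} : Set (Fin 5 ⊕ Fin 6)) (Ts i)) ∧
      (completeBipartiteGraph (Fin 5) (Fin 6)).CompletelyIndependent
        ({Sum.inl 0, Sum.inl 1, Sum.inr 0, Sum.inr 1} : Set (Fin 5 ⊕ Fin 6)) Ts := by
  rintro ⟨Ts, hT, hCI⟩
  refine not_internallyDisjoint_completeBipartiteGraph (x₁ := 0) (x₂ := 1) (by decide) (by simp)
    (by simp) le_rfl ?_ Ts hT hCI.internallyDisjoint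
  simp only [Set.mem_insert_iff, Set.mem_singleton_iff, reduceCtorEq, Sum.inr.injEq, false_or,
    Nat.card_eq_fintype_card, Fintype.card_fin]
  decide
end
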